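/- arXiv:1406.6956 — 7 statements merged into one kernel-verified Lean document; each statement's English description precedes it below -/
import Mathlib

section
/- For every α ∈ [1/2, 1) there exist a constant c > 0 and an integer N₀ such that for all integers S ≥ 2 and n ≥ N₀, the minimax risk for estimating F_α(P) over P ∈ M_S under the multinomial sampling model with n samples satisfies inf_{F̂} sup_{P ∈ M_S} E_P[(F̂(X) − F_α(P))²] ≥ c·S^{2−2α}/n. -/
open scoped BigOperators ENNReal

/-- The probability simplex on `S` outcomes. -/
def simplex (S : ℕ) : Set (Fin S → ℝ) :=
  {P | (∀ i, 0 ≤ P i) ∧ ∑ i, P i = 1}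

/-- Joint pmf of `n` i.i.d. samples from `P`. -/
noncomputable def multPMF (S n : ℕ) (P : Fin S → ℝ) (x : Fin n → Fin S) : ℝ :=
  ∏ j, P (x j)

/-- Expected squared error of an estimator under the multinomial (i.i.d.) model. -/
noncomputable def multRisk (S n : ℕ) (P : Fin S → ℝ) (t : ℝ)
    (est : (Fin n → Fin S) → ℝ) : ℝ≥0∞ :=
  ∑' x : Fin n → Fin S, ENNReal.ofReal (multPMF S n P x * (est x - t) ^ 2)

/-- Minimax risk for estimating `F P` under the multinomial model with `n` samples. -/
noncomputable def multMinimax (S n : ℕ) (F : (Fin S → ℝ) → ℝ) : ℝ≥0∞ :=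
  ⨅ est : (Fin n → Fin S) → ℝ, ⨆ P ∈ simplex S, multRisk S n P (F P) est

/-- The power-sum functional `F_α(P) = ∑ i, (P i)^α` (real power; `0^α = 0` for `α > 0`). -/
noncomputable def Falpha (S : ℕ) (α : ℝ) (P : Fin S → ℝ) : ℝ :=
  ∑ i, P i ^ α

/-!
Le Cam's two-point method. Let `P` put mass `3/4` on one atom and spread `1/4` uniformly over
the other `S - 1`, and let `Q` move mass `δ = 1/(4√n)` from the light atoms to the heavy one.
The Bhattacharyya coefficient `∑ √(P i Q i)` is `1 - O(δ²)`, so the `n`-fold products still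
overlap by a constant and no estimator can tell `P` from `Q`. Meanwhile `x ↦ x^α` has slope
of order `S^(1-α)` at the light atoms `1/(4(S-1))`, so `F_α(P) - F_α(Q) ≳ S^(1-α) δ`, and the
squared gap `≳ S^(2-2α)/n` bounds the minimax risk from below.
-/

open Real Finset

lemma rpow_le_rpow_add_mul_sub {x y α : ℝ} (hx : 0 < x) (hy : 0 ≤ y) (hα0 : 0 ≤ α)
    (hα1 : α ≤ 1) : y ^ α ≤ x ^ α + α * x ^ (α - 1) * (y - x) := by
  have hs : -1 ≤ (y - x) / x := by rw [le_div_iff₀ hx]; linarith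
  have hy_eq : y = x * (1 + (y - x) / x) := by field_simp; ring
  calc y ^ α = x ^ α * (1 + (y - x) / x) ^ α := by
        conv_lhs => rw [hy_eq]
        exact mul_rpow hx.le (by linarith)
    _ ≤ x ^ α * (1 + α * ((y - x) / x)) :=
        mul_le_mul_of_nonneg_left (rpow_one_add_le_one_add_mul_self hs hα0 hα1)
          (rpow_nonneg hx.le _)
    _ = x ^ α + α * x ^ (α - 1) * (y - x) := by
        rw [rpow_sub_one hx.ne']; field_simp

/-- Equivalently `(√p - √q)² ≤ (p - q)² / p`, since `(√p + √q)² ≥ p`. -/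
lemma add_div_two_sub_sq_div_le_sqrt_mul {p q : ℝ} (hp : 0 < p) (hq : 0 ≤ q) :
    (p + q) / 2 - (p - q) ^ 2 / (2 * p) ≤ √(p * q) := by
  obtain ⟨a, ha, rfl⟩ : ∃ a, 0 < a ∧ a ^ 2 = p := ⟨√p, sqrt_pos.2 hp, sq_sqrt hp.le⟩
  obtain ⟨b, hb, rfl⟩ : ∃ b, 0 ≤ b ∧ b ^ 2 = q := ⟨√q, sqrt_nonneg q, sq_sqrt hq⟩
  rw [← mul_pow, sqrt_sq (by positivity), sub_le_iff_le_add, ← sub_le_iff_le_add',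
    le_div_iff₀ (by positivity)]
  nlinarith [mul_nonneg (sq_nonneg (a - b)) (mul_nonneg hb (by positivity : 0 ≤ 2 * a + b))]

lemma one_sub_mul_le_pow_of_one_sub_le {a ρ : ℝ} (ha : a ≤ 1) (hρ : 1 - a ≤ ρ) (k : ℕ) :
    1 - k * a ≤ ρ ^ k :=
  calc 1 - k * a = 1 + k * -a := by ring
    _ ≤ (1 + -a) ^ k := one_add_mul_le_pow (by linarith) k
    _ ≤ ρ ^ k := pow_le_pow_left₀ (by linarith) (by linarith) k

lemma one_sub_rpow_mul_le_rpow_sub {β m : ℝ} (hβ : 0 ≤ β) (hm : 1 ≤ m) :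
    (1 - (1 / 3) ^ β) * (m + 1) ^ β ≤ (4 * m) ^ β - (4 / 3) ^ β := by
  have h₁ : (4 / 3 : ℝ) ^ β ≤ (1 / 3) ^ β * (4 * m) ^ β := by
    rw [← mul_rpow (by norm_num) (by linarith)]
    exact rpow_le_rpow (by norm_num) (by linarith) hβ
  have h₂ : (m + 1) ^ β ≤ (4 * m) ^ β := rpow_le_rpow (by linarith) (by linarith) hβ
  have h₃ : (1 / 3 : ℝ) ^ β ≤ 1 := rpow_le_one (by norm_num) (by norm_num) hβ
  nlinarith [mul_le_mul_of_nonneg_left h₂ (sub_nonneg.2 h₃)]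

lemma sum_ite_eq_add_mul {S : ℕ} (i₀ : Fin S) (a b : ℝ) :
    ∑ i, (if i = i₀ then a else b) = a + ((S : ℝ) - 1) * b := by
  rw [Fintype.sum_eq_add_sum_compl i₀, if_pos rfl,
    sum_congr rfl fun i hi => if_neg (by simpa using hi), sum_const, card_compl, card_singleton,
    Fintype.card_fin, nsmul_eq_mul, Nat.cast_sub (Fin.pos i₀)]
  simp

section LeCam

variable {ι : Type*} [Fintype ι] {p q : ι → ℝ}

/-- Le Cam's inequality: Cauchy–Schwarz applied to `√(p q) = √(min p q) * √(max p q)`. -/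
lemma sq_sum_sqrt_mul_le_two_mul_sum_min (hp : ∀ x, 0 ≤ p x) (hq : ∀ x, 0 ≤ q x)
    (hp1 : ∑ x, p x = 1) (hq1 : ∑ x, q x = 1) :
    (∑ x, √(p x * q x)) ^ 2 ≤ 2 * ∑ x, min (p x) (q x) := by
  have hmin : ∀ x, 0 ≤ min (p x) (q x) := fun x => le_min (hp x) (hq x)
  have hmax : ∀ x, 0 ≤ max (p x) (q x) := fun x => (hp x).trans (le_max_left _ _)
  have hsum_max : ∑ x, max (p x) (q x) ≤ 2 := calc
    ∑ x, max (p x) (q x) ≤ ∑ x, (p x + q x) :=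
      sum_le_sum fun x _ => max_le_add_of_nonneg (hp x) (hq x)
    _ = 2 := by rw [sum_add_distrib, hp1, hq1]; norm_num
  calc (∑ x, √(p x * q x)) ^ 2
      = (∑ x, √(min (p x) (q x)) * √(max (p x) (q x))) ^ 2 := by
        simp only [← sqrt_mul (hmin _), min_mul_max]
    _ ≤ (∑ x, √(min (p x) (q x)) ^ 2) * ∑ x, √(max (p x) (q x)) ^ 2 :=
        sum_mul_sq_le_sq_mul_sq _ _ _
    _ = (∑ x, min (p x) (q x)) * ∑ x, max (p x) (q x) := by
        simp only [sq_sqrt, hmin, hmax]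
    _ ≤ 2 * ∑ x, min (p x) (q x) := by
        rw [mul_comm]; exact mul_le_mul_of_nonneg_right hsum_max (sum_nonneg fun x _ => hmin x)

lemma min_mul_sq_sub_div_two_le {p q : ℝ} (hp : 0 ≤ p) (hq : 0 ≤ q) (e a b : ℝ) :
    min p q * (a - b) ^ 2 / 2 ≤ p * (e - a) ^ 2 + q * (e - b) ^ 2 := by
  have hab : (a - b) ^ 2 / 2 ≤ (e - a) ^ 2 + (e - b) ^ 2 := by
    nlinarith [sq_nonneg (2 * e - a - b)]
  nlinarith [min_le_left p q, min_le_right p q, le_min hp hq, sq_nonneg (e - a), sq_nonneg (e - b)]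

lemma ofReal_sum_min_mul_le (hp : ∀ x, 0 ≤ p x) (hq : ∀ x, 0 ≤ q x) (e : ι → ℝ) (a b : ℝ) :
    ENNReal.ofReal ((∑ x, min (p x) (q x)) * (a - b) ^ 2 / 2) ≤
      ∑ x, ENNReal.ofReal (p x * (e x - a) ^ 2) + ∑ x, ENNReal.ofReal (q x * (e x - b) ^ 2) := by
  rw [sum_mul, sum_div, ENNReal.ofReal_sum_of_nonneg fun x _ => by
    have := le_min (hp x) (hq x); positivity, ← sum_add_distrib]
  gcongr with x
  exact (ENNReal.ofReal_le_ofReal (min_mul_sq_sub_div_two_le (hp x) (hq x) _ _ _)).trans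
    ENNReal.ofReal_add_le

end LeCam

section Multinomial

variable {S n : ℕ}

lemma sum_multPMF (P : Fin S → ℝ) : ∑ x, multPMF S n P x = (∑ i, P i) ^ n := by
  simp only [multPMF, ← Fintype.prod_sum (fun (_ : Fin n) i => P i), prod_const, card_univ,
    Fintype.card_fin]

lemma sum_sqrt_multPMF_mul {P Q : Fin S → ℝ} (hP : ∀ i, 0 ≤ P i) (hQ : ∀ i, 0 ≤ Q i) :
    ∑ x, √(multPMF S n P x * multPMF S n Q x) = (∑ i, √(P i * Q i)) ^ n := by
  rw [← sum_multPMF]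
  refine sum_congr rfl fun x _ => ?_
  rw [multPMF, multPMF, multPMF, ← prod_mul_distrib,
    sqrt_prod _ fun j _ => mul_nonneg (hP _) (hQ _)]

lemma multRisk_eq_sum (P : Fin S → ℝ) (t : ℝ) (est : (Fin n → Fin S) → ℝ) :
    multRisk S n P t est = ∑ x, ENNReal.ofReal (multPMF S n P x * (est x - t) ^ 2) :=
  tsum_fintype _

theorem ofReal_le_multMinimax_of_mem_simplex (F : (Fin S → ℝ) → ℝ) {P Q : Fin S → ℝ}
    (hP : P ∈ simplex S) (hQ : Q ∈ simplex S) :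
    ENNReal.ofReal ((∑ i, √(P i * Q i)) ^ (2 * n) * (F P - F Q) ^ 2 / 8) ≤
      multMinimax S n F := by
  have hpmf_nonneg {R : Fin S → ℝ} (hR : R ∈ simplex S) (x : Fin n → Fin S) :
      0 ≤ multPMF S n R x :=
    prod_nonneg fun j _ => hR.1 _
  have hpmf_sum {R : Fin S → ℝ} (hR : R ∈ simplex S) : ∑ x, multPMF S n R x = 1 := by
    rw [sum_multPMF, hR.2, one_pow]
  have hoverlap := sq_sum_sqrt_mul_le_two_mul_sum_min (hpmf_nonneg hP) (hpmf_nonneg hQ)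
    (hpmf_sum hP) (hpmf_sum hQ)
  rw [sum_sqrt_multPMF_mul hP.1 hQ.1, ← pow_mul, mul_comm n] at hoverlap
  refine le_iInf fun est => ?_
  set R := ⨆ P ∈ simplex S, multRisk S n P (F P) est
  have hrisk : ENNReal.ofReal ((∑ i, √(P i * Q i)) ^ (2 * n) * (F P - F Q) ^ 2 / 4) ≤ R + R :=
    calc _ ≤ ENNReal.ofReal
          ((∑ x, min (multPMF S n P x) (multPMF S n Q x)) * (F P - F Q) ^ 2 / 2) := by
          refine ENNReal.ofReal_le_ofReal ?_
          nlinarith [mul_le_mul_of_nonneg_right hoverlap (sq_nonneg (F P - F Q))]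
      _ ≤ multRisk S n P (F P) est + multRisk S n Q (F Q) est := by
          rw [multRisk_eq_sum, multRisk_eq_sum]
          exact ofReal_sum_min_mul_le (hpmf_nonneg hP) (hpmf_nonneg hQ) est _ _
      _ ≤ R + R := add_le_add (le_biSup (fun P => multRisk S n P (F P) est) hP)
          (le_biSup (fun P => multRisk S n P (F P) est) hQ)
  rw [← two_mul, show (∑ i, √(P i * Q i)) ^ (2 * n) * (F P - F Q) ^ 2 / 4 =
    2 * ((∑ i, √(P i * Q i)) ^ (2 * n) * (F P - F Q) ^ 2 / 8) by ring,
    ENNReal.ofReal_mul zero_le_two, ENNReal.ofReal_ofNat] at hrisk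
  exact (ENNReal.mul_le_mul_iff_right two_ne_zero ENNReal.ofNat_ne_top).1 hrisk

end Multinomial

noncomputable def spikeDist (S : ℕ) (i₀ : Fin S) (δ : ℝ) : Fin S → ℝ :=
  fun i => if i = i₀ then 3 / 4 + δ else (1 / 4 - δ) / (S - 1)

section Spike

variable {S : ℕ} (i₀ : Fin S) {δ : ℝ}

lemma spikeDist_mem_simplex (hS : 2 ≤ S) (hδ0 : 0 ≤ δ) (hδ : δ ≤ 1 / 4) :
    spikeDist S i₀ δ ∈ simplex S := by
  have hm : (0 : ℝ) < S - 1 := by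
    have : (2 : ℝ) ≤ S := by exact_mod_cast hS
    linarith
  refine ⟨fun i => ?_, ?_⟩
  · unfold spikeDist
    split_ifs
    · positivity
    · exact div_nonneg (by linarith) hm.le
  · simp only [spikeDist, sum_ite_eq_add_mul]
    field_simp
    ring

lemma Falpha_spikeDist (α : ℝ) :
    Falpha S α (spikeDist S i₀ δ) =
      (3 / 4 + δ) ^ α + ((S : ℝ) - 1) * ((1 / 4 - δ) / (S - 1)) ^ α := by
  simp only [Falpha, spikeDist, apply_ite (· ^ α), sum_ite_eq_add_mul]

lemma sum_sqrt_spikeDist_mul (hS : 2 ≤ S) :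
    ∑ i, √(spikeDist S i₀ 0 i * spikeDist S i₀ δ i) =
      √(3 / 4 * (3 / 4 + δ)) + √(1 / 4 * (1 / 4 - δ)) := by
  have hm : (0 : ℝ) < S - 1 := by
    have : (2 : ℝ) ≤ S := by exact_mod_cast hS
    linarith
  simp only [spikeDist, apply_ite₂ (fun a b : ℝ => √(a * b)), sum_ite_eq_add_mul]
  rw [show (1 / 4 - 0) / ((S : ℝ) - 1) * ((1 / 4 - δ) / (S - 1)) =
      1 / 4 * (1 / 4 - δ) / (S - 1) ^ 2 by rw [sub_zero, div_mul_div_comm, ← sq],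
    sqrt_div' _ (sq_nonneg _), sqrt_sq hm.le, add_zero, mul_div_cancel₀ _ hm.ne']

lemma one_sub_le_sum_sqrt_spikeDist_mul (hS : 2 ≤ S) (hδ0 : 0 ≤ δ) (hδ : δ ≤ 1 / 4) :
    1 - 8 / 3 * δ ^ 2 ≤ ∑ i, √(spikeDist S i₀ 0 i * spikeDist S i₀ δ i) := by
  rw [sum_sqrt_spikeDist_mul i₀ hS]
  have h₁ := add_div_two_sub_sq_div_le_sqrt_mul (p := 3 / 4) (q := 3 / 4 + δ) (by norm_num)
    (by linarith)
  have h₂ := add_div_two_sub_sq_div_le_sqrt_mul (p := 1 / 4) (q := 1 / 4 - δ) (by norm_num)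
    (by linarith)
  ring_nf at h₁ h₂ ⊢
  linarith

lemma Falpha_spikeDist_sub_ge {α : ℝ} (hS : 2 ≤ S) (hα0 : 0 ≤ α) (hα1 : α ≤ 1) (hδ0 : 0 ≤ δ)
    (hδ : δ ≤ 1 / 4) :
    α * (1 - (1 / 3) ^ (1 - α)) * (S : ℝ) ^ (1 - α) * δ ≤
      Falpha S α (spikeDist S i₀ 0) - Falpha S α (spikeDist S i₀ δ) := by
  obtain ⟨m, hm, hmS⟩ : ∃ m : ℝ, 1 ≤ m ∧ (S : ℝ) = m + 1 :=
    ⟨S - 1, by linarith [show (2 : ℝ) ≤ S by exact_mod_cast hS], by ring⟩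
  have hm0 : 0 < m := by linarith
  rw [Falpha_spikeDist, Falpha_spikeDist, hmS, add_sub_cancel_right, add_zero, sub_zero]
  have h₁ : (3 / 4 + δ) ^ α ≤ (3 / 4 : ℝ) ^ α + α * (4 / 3) ^ (1 - α) * δ := by
    have := rpow_le_rpow_add_mul_sub (x := 3 / 4) (y := 3 / 4 + δ) (by norm_num) (by linarith)
      hα0 hα1
    rwa [show (3 / 4 : ℝ) ^ (α - 1) = (4 / 3) ^ (1 - α) by
      rw [← inv_div, inv_rpow (by norm_num), ← rpow_neg (by norm_num), neg_sub],
      add_sub_cancel_left] at this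
  have h₂ : m * ((1 / 4 - δ) / m) ^ α ≤ m * (1 / 4 / m) ^ α - α * (4 * m) ^ (1 - α) * δ := by
    have := rpow_le_rpow_add_mul_sub (x := 1 / 4 / m) (y := (1 / 4 - δ) / m) (by positivity)
      (div_nonneg (by linarith) hm0.le) hα0 hα1
    rw [show (1 / 4 / m) ^ (α - 1) = (4 * m) ^ (1 - α) by
      rw [div_div, ← inv_eq_one_div, inv_rpow (by positivity), ← rpow_neg (by positivity),
        neg_sub]] at this
    calc m * ((1 / 4 - δ) / m) ^ α
        ≤ m * ((1 / 4 / m) ^ α + α * (4 * m) ^ (1 - α) * ((1 / 4 - δ) / m - 1 / 4 / m)) :=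
          mul_le_mul_of_nonneg_left this hm0.le
      _ = _ := by field_simp; ring
  nlinarith [mul_le_mul_of_nonneg_left
    (one_sub_rpow_mul_le_rpow_sub (β := 1 - α) (by linarith) hm) (mul_nonneg hα0 hδ0)]

lemma two_thirds_le_pow_sum_sqrt_spikeDist_mul (hS : 2 ≤ S) {n : ℕ} (hn : 1 ≤ n) (hδ0 : 0 ≤ δ)
    (hδ : δ ≤ 1 / 4) (hδ2 : δ ^ 2 = 1 / (16 * n)) :
    2 / 3 ≤ (∑ i, √(spikeDist S i₀ 0 i * spikeDist S i₀ δ i)) ^ (2 * n) := by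
  have hn1 : (1 : ℝ) ≤ n := by exact_mod_cast hn
  have hρ : 1 - 1 / (6 * n) ≤ ∑ i, √(spikeDist S i₀ 0 i * spikeDist S i₀ δ i) := by
    convert one_sub_le_sum_sqrt_spikeDist_mul i₀ hS hδ0 hδ using 2
    rw [hδ2]
    field_simp
    norm_num
  calc (2 / 3 : ℝ) = 1 - ((2 * n : ℕ) : ℝ) * (1 / (6 * n)) := by
        push_cast; field_simp; norm_num
    _ ≤ _ := one_sub_mul_le_pow_of_one_sub_le
        (by rw [div_le_one (by positivity)]; linarith) hρ (2 * n)

end Spike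

theorem Falpha_minimax_variance_lower_bound (α : ℝ) (hα1 : 1 / 2 ≤ α) (hα2 : α < 1) :
    ∃ c : ℝ, 0 < c ∧ ∃ N₀ : ℕ,
      ∀ S n : ℕ, 2 ≤ S → N₀ ≤ n →
        ENNReal.ofReal (c * (S : ℝ) ^ (2 - 2 * α) / (n : ℝ))
          ≤ multMinimax S n (Falpha S α) := by
  set κ := α * (1 - (1 / 3 : ℝ) ^ (1 - α))
  have hκ : 0 < κ :=
    mul_pos (by linarith) (sub_pos.2 (rpow_lt_one (by norm_num) (by norm_num) (by linarith)))
  refine ⟨κ ^ 2 / 192, by positivity, 1, fun S n hS hn => ?_⟩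
  have hn1 : (1 : ℝ) ≤ n := by exact_mod_cast hn
  have hn0 : (0 : ℝ) < n := by linarith
  set δ := 1 / (4 * √n)
  have hδ0 : 0 ≤ δ := by positivity
  have hδ : δ ≤ 1 / 4 := by
    have : 1 ≤ √n := one_le_sqrt.2 hn1
    rw [div_le_div_iff₀ (by positivity) (by norm_num)]
    linarith
  have hδ2 : δ ^ 2 = 1 / (16 * n) := by
    rw [div_pow, mul_pow, sq_sqrt hn0.le]; norm_num
  set i₀ : Fin S := ⟨0, by omega⟩
  have hoverlap := two_thirds_le_pow_sum_sqrt_spikeDist_mul i₀ hS hn hδ0 hδ hδ2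
  have hgap := Falpha_spikeDist_sub_ge i₀ hS (α := α) (by linarith) hα2.le hδ0 hδ
  refine le_trans (ENNReal.ofReal_le_ofReal ?_) (ofReal_le_multMinimax_of_mem_simplex _
    (spikeDist_mem_simplex i₀ hS le_rfl (by norm_num)) (spikeDist_mem_simplex i₀ hS hδ0 hδ))
  have hS2 : (S : ℝ) ^ (2 - 2 * α) = ((S : ℝ) ^ (1 - α)) ^ 2 := by
    rw [← rpow_natCast, ← rpow_mul (Nat.cast_nonneg S)]; ring_nf
  calc κ ^ 2 / 192 * (S : ℝ) ^ (2 - 2 * α) / n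
        = 2 / 3 * (κ * (S : ℝ) ^ (1 - α) * δ) ^ 2 / 8 := by
        rw [mul_pow, mul_pow, hδ2, hS2]; field_simp; ring
    _ ≤ (∑ i, √(spikeDist S i₀ 0 i * spikeDist S i₀ δ i)) ^ (2 * n) *
          (Falpha S α (spikeDist S i₀ 0) - Falpha S α (spikeDist S i₀ δ)) ^ 2 / 8 := by
        gcongr
end

section
/- Let S ≥ 1 be an integer and let P ∈ M_S. Define V(P) = ∑_{i=1}^S p_i·(ln p_i)² − ( ∑_{i=1}^S p_i·ln p_i )², with the conventions 0·(ln 0)² = 0 and 0·ln 0 = 0 (this is the variance of −ln P(X) for X ~ P). Then V(P) ≤ (ln S + 1)²; moreover, if S ≥ 56 then V(P) ≤ (3/4)·(ln S)². -/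
open scoped BigOperators

/-- The variance of `-ln P(X)` for `X ~ P` (conventions `0·(ln 0)² = 0` and
`0·ln 0 = 0` are automatic since `Real.log 0 = 0`). -/
noncomputable def varLog (S : ℕ) (P : Fin S → ℝ) : ℝ :=
  ∑ i, P i * (Real.log (P i)) ^ 2 - (∑ i, P i * Real.log (P i)) ^ 2

/-!
The variance of `-log P(X)` is at most its second moment about any point, so
`V(P) ≤ ∑ pᵢ (log pᵢ + log S - c / 2)²`. With `xᵢ = S pᵢ` the summand becomes
`xᵢ (log xᵢ - c / 2)² / S`, and the pointwise bound `x log² x ≤ c (x log x + 1 - x)` on `[0, S]`,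
valid once `c ≥ 4` and `11 c ≥ 19 log S`, turns the sum into `c² / 4` because `∑ xᵢ = S`.
Taking `c = max 4 (2 log S)` gives `V(P) ≤ (log S + 1)²` for `S ≥ 3`, and `c = 19 / 11 · log S`
gives `V(P) ≤ (19 / 22)² log² S ≤ 3 / 4 · log² S` for `S ≥ 56`. For `S ≤ 2` the bound
`p log² p ≤ 2 (p log p + 1 - p)` on `[0, 1]` gives `V(P) ≤ 2 (S - 1)`.
-/

open Real InformationTheory

lemma mul_sq_log_sub_two_le_four_of_log_le_two {x : ℝ} (hx : 0 < x) (hlog : log x ≤ 2) :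
    x * (log x - 2) ^ 2 ≤ 4 := by
  set t := log x / 2
  have ht : t ≤ 1 := by simp only [t]; linarith
  have hx_eq : x = exp t ^ 2 := by
    rw [sq, ← exp_add, show t + t = log x by ring, exp_log hx]
  have h_le : (1 - t) * exp t ≤ 1 := by
    calc (1 - t) * exp t ≤ exp (-t) * exp t := by
          gcongr
          linarith [add_one_le_exp (-t)]
      _ = 1 := by rw [← exp_add, neg_add_cancel, exp_zero]
  have h_nonneg : 0 ≤ (1 - t) * exp t := mul_nonneg (by linarith) (exp_pos t).le
  calc x * (log x - 2) ^ 2 = 4 * ((1 - t) * exp t) ^ 2 := by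
        rw [show log x = 2 * t by simp only [t]; ring, hx_eq]; ring
    _ ≤ 4 := by nlinarith

lemma log_eight : log 8 = 3 * log 2 := by
  rw [show (8 : ℝ) = 2 ^ 3 by norm_num, log_pow, Nat.cast_ofNat]

lemma mul_sq_log_sub_two_le_four {x : ℝ} (hx : 0 < x) (hx8 : x ≤ 8) :
    x * (log x - 2) ^ 2 ≤ 4 := by
  rcases le_or_gt (log x) 2 with hlog | hlog
  · exact mul_sq_log_sub_two_le_four_of_log_le_two hx hlog
  have hlog8 : log x ≤ 3 * log 2 := log_eight ▸ log_le_log hx hx8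
  nlinarith [log_two_lt_d9, mul_le_mul_of_nonneg_right hx8 (sq_nonneg (log x - 2))]

lemma mul_sub_one_le_mul_log {x : ℝ} (hx : 8 ≤ x) : 19 * (x - 1) ≤ 8 * (x * log x) := by
  have hx0 : 0 < x := by linarith
  have h_tangent : 1 - 8 / x ≤ log x - 3 * log 2 := by
    have := one_sub_inv_le_log_of_pos (show 0 < x / 8 by positivity)
    rwa [inv_div, log_div hx0.ne' (by norm_num), log_eight] at this
  have h_mul : x - 8 ≤ x * log x - 3 * log 2 * x := by
    have := mul_le_mul_of_nonneg_left h_tangent hx0.le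
    rwa [mul_sub, mul_one, mul_div_cancel₀ _ hx0.ne', mul_sub, mul_comm x (3 * log 2)] at this
  nlinarith [log_two_gt_d9]

/-- Below `8` this is the identity `4 * klFun x - x * log x ^ 2 = 4 - x * (log x - 2) ^ 2`;
above `8`, `19 * (x - 1) ≤ 8 * (x * log x)` gives `klFun x ≥ 11 / 19 * (x * log x)`. -/
lemma mul_sq_log_le_mul_klFun {x L c : ℝ} (hx : 0 ≤ x) (hlog : log x ≤ L) (hc : 4 ≤ c)
    (hcL : 19 * L ≤ 11 * c) : x * log x ^ 2 ≤ c * klFun x := by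
  have h_kl := klFun_nonneg hx
  rcases hx.eq_or_lt with rfl | hx0
  · simpa using h_kl.trans (le_mul_of_one_le_left h_kl (by linarith))
  rcases le_or_gt x 8 with hx8 | hx8
  · have h4 : x * log x ^ 2 ≤ 4 * klFun x := by
      rw [klFun_apply]; nlinarith [mul_sq_log_sub_two_le_four hx0 hx8]
    nlinarith
  · have hxlog : 0 ≤ x * log x := mul_nonneg hx (log_nonneg (by linarith))
    have h19 := mul_sub_one_le_mul_log hx8.le
    rw [klFun_apply]
    nlinarith [mul_le_mul_of_nonneg_right hlog hxlog,
      mul_le_mul_of_nonneg_left h19 (by linarith : 0 ≤ c)]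

lemma mul_sq_log_sub_le {x L c : ℝ} (hx : 0 ≤ x) (hlog : log x ≤ L) (hc : 4 ≤ c)
    (hcL : 19 * L ≤ 11 * c) : x * (log x - c / 2) ^ 2 ≤ c * (1 - x) + c ^ 2 / 4 * x := by
  have := mul_sq_log_le_mul_klFun hx hlog hc hcL
  rw [klFun_apply] at this
  linarith

lemma mul_sq_log_le_two_mul_klFun {x : ℝ} (hx : 0 ≤ x) (hx1 : x ≤ 1) :
    x * log x ^ 2 ≤ 2 * klFun x := by
  rcases hx.eq_or_lt with rfl | hx0
  · simp [klFun_zero]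
  set y := -log x
  have hy : 0 ≤ y := by simpa [y] using log_nonpos hx hx1
  have hxy : x * exp y = 1 := by simp [y, exp_neg, exp_log hx0, hx0.ne']
  have := mul_le_mul_of_nonneg_left (quadratic_le_exp_of_nonneg hy) hx
  rw [klFun_apply, show log x = -y by simp [y]]
  nlinarith

lemma sum_mul_sq_sub_sq_sum_le {ι : Type*} [Fintype ι] {w : ι → ℝ} (hw : ∑ i, w i = 1)
    (f : ι → ℝ) (a : ℝ) :
    ∑ i, w i * f i ^ 2 - (∑ i, w i * f i) ^ 2 ≤ ∑ i, w i * (f i + a) ^ 2 := by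
  have h_expand : ∑ i, w i * (f i + a) ^ 2
      = ∑ i, w i * f i ^ 2 + 2 * a * ∑ i, w i * f i + a ^ 2 * ∑ i, w i := by
    simp only [Finset.mul_sum, ← Finset.sum_add_distrib]
    exact Finset.sum_congr rfl fun i _ => by ring
  rw [h_expand, hw]
  nlinarith [sq_nonneg (∑ i, w i * f i + a)]

lemma le_one_of_mem_simplex {S : ℕ} {P : Fin S → ℝ} (hP : P ∈ simplex S) (i : Fin S) :
    P i ≤ 1 :=
  hP.2 ▸ Finset.single_le_sum (fun j _ => hP.1 j) (Finset.mem_univ i)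

lemma varLog_le_sq_div_four {S : ℕ} {P : Fin S → ℝ} (hP : P ∈ simplex S) {c : ℝ}
    (hc : 4 ≤ c) (hcS : 19 * log S ≤ 11 * c) : varLog S P ≤ c ^ 2 / 4 := by
  have hS : (1 : ℝ) ≤ S := by
    rcases S with _ | S
    · simpa using hP.2
    · simp
  have h_point : ∀ i, S * (P i * (log (P i) + (log S - c / 2)) ^ 2)
      ≤ c * (1 - S * P i) + c ^ 2 / 4 * (S * P i) := by
    intro i
    rcases (hP.1 i).eq_or_lt with h0 | hpos
    · simp only [← h0, zero_mul, mul_zero, sub_zero, add_zero, mul_one]; linarith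
    have h_log : log (S * P i) ≤ log S := log_le_log (by positivity)
      (mul_le_of_le_one_right (by positivity) (le_one_of_mem_simplex hP i))
    calc S * (P i * (log (P i) + (log S - c / 2)) ^ 2)
        = S * P i * (log (S * P i) - c / 2) ^ 2 := by
          rw [log_mul (by positivity) hpos.ne']; ring
      _ ≤ _ := mul_sq_log_sub_le (by positivity) h_log hc hcS
  have h_sum : (S : ℝ) * ∑ i, P i * (log (P i) + (log S - c / 2)) ^ 2 ≤ S * (c ^ 2 / 4) := by
    calc (S : ℝ) * ∑ i, P i * (log (P i) + (log S - c / 2)) ^ 2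
        ≤ ∑ i, (c * (1 - S * P i) + c ^ 2 / 4 * (S * P i)) := by
          rw [Finset.mul_sum]; exact Finset.sum_le_sum fun i _ => h_point i
      _ = S * (c ^ 2 / 4) := by
          simp only [Finset.sum_add_distrib, ← Finset.mul_sum, Finset.sum_sub_distrib, hP.2,
            Finset.sum_const, Finset.card_univ, Fintype.card_fin, nsmul_eq_mul]
          ring
  exact (sum_mul_sq_sub_sq_sum_le hP.2 _ _).trans (le_of_mul_le_mul_left h_sum (by positivity))

lemma varLog_le_two_mul_sub_one {S : ℕ} {P : Fin S → ℝ} (hP : P ∈ simplex S) :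
    varLog S P ≤ 2 * (S - 1) := by
  have h_entropy : ∑ i, P i * log (P i) ≤ 0 :=
    Finset.sum_nonpos fun i _ => mul_log_nonpos (hP.1 i) (le_one_of_mem_simplex hP i)
  calc varLog S P ≤ ∑ i, P i * log (P i) ^ 2 := sub_le_self _ (sq_nonneg _)
    _ ≤ ∑ i, 2 * klFun (P i) := Finset.sum_le_sum fun i _ =>
        mul_sq_log_le_two_mul_klFun (hP.1 i) (le_one_of_mem_simplex hP i)
    _ = 2 * (∑ i, P i * log (P i) + S - 1) := by
        simp only [klFun_apply, ← Finset.mul_sum, Finset.sum_sub_distrib, Finset.sum_add_distrib,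
          hP.2]
        simp
    _ ≤ 2 * (S - 1) := by linarith

theorem varLog_bound_general (S : ℕ) (P : Fin S → ℝ) (hP : P ∈ simplex S) :
    varLog S P ≤ (Real.log S + 1) ^ 2 ∧
      (56 ≤ S → varLog S P ≤ 3 / 4 * (Real.log S) ^ 2) := by
  have hlog2 := log_two_gt_d9
  refine ⟨?_, fun hS => ?_⟩
  · rcases le_or_gt S 2 with hS | hS
    · refine (varLog_le_two_mul_sub_one hP).trans ?_
      interval_cases S <;> norm_num
      nlinarith
    have hL : 1 ≤ log S := by
      rw [le_log_iff_exp_le (by positivity)]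
      have : (3 : ℝ) ≤ S := by exact_mod_cast hS
      linarith [exp_one_lt_d9]
    have hc : max 4 (2 * log S) ≤ 2 * (log S + 1) := max_le (by linarith) (by linarith)
    refine (varLog_le_sq_div_four hP (le_max_left _ _)
      (by linarith [le_max_right 4 (2 * log S)])).trans ?_
    nlinarith [le_max_left 4 (2 * log S)]
  · have hL : 4 * log 2 ≤ log S := by
      have : (16 : ℝ) ≤ S := by exact_mod_cast (by omega : 16 ≤ S)
      calc 4 * log 2 = log (2 ^ 4) := by rw [log_pow, Nat.cast_ofNat]
        _ ≤ log S := log_le_log (by norm_num) (by linarith)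
    refine (varLog_le_sq_div_four hP (c := 19 / 11 * log S) (by linarith) (by linarith)).trans ?_
    nlinarith [sq_nonneg (log S)]

theorem varLog_bound (S : ℕ) (hS : 1 ≤ S) (P : Fin S → ℝ) (hP : P ∈ simplex S) :
    varLog S P ≤ (Real.log S + 1) ^ 2 ∧
      (56 ≤ S → varLog S P ≤ 3 / 4 * (Real.log S) ^ 2) :=
  varLog_bound_general S P hP
end

section
/- Let S ≥ 1 and n ≥ 1 be integers and let F : M_S → ℝ be a bounded function. Let R(S, n) denote the minimax risk for estimating F(P) over P ∈ M_S under the multinomial sampling model with n samples, and for a real λ > 0 let R_P(S, λ) denote the minimax risk for estimating F(P) over P ∈ M_S under the Poissonized sampling model with parameter λ. Then R_P(S, 2n) − e^{−n/4}·sup_{P ∈ M_S} F(P)² ≤ R(S, n) ≤ 2·R_P(S, n/2). -/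
open scoped BigOperators ENNReal

/-- Joint pmf of independent Poisson observations `Z i ~ Poisson (lam * P i)`. -/
noncomputable def poissonPMF (S : ℕ) (lam : ℝ) (P : Fin S → ℝ) (z : Fin S → ℕ) : ℝ :=
  ∏ i, Real.exp (-(lam * P i)) * (lam * P i) ^ (z i) / (Nat.factorial (z i) : ℝ)

/-- Expected squared error of an estimator under the Poissonized model. -/
noncomputable def poissonRisk (S : ℕ) (lam : ℝ) (P : Fin S → ℝ) (t : ℝ)
    (est : (Fin S → ℕ) → ℝ) : ℝ≥0∞ :=
  ∑' z : Fin S → ℕ, ENNReal.ofReal (poissonPMF S lam P z * (est z - t) ^ 2)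

/-- Minimax risk for estimating `F P` under the Poissonized model with parameter `lam`. -/
noncomputable def poissonMinimax (S : ℕ) (lam : ℝ) (F : (Fin S → ℝ) → ℝ) : ℝ≥0∞ :=
  ⨅ est : (Fin S → ℕ) → ℝ, ⨆ P ∈ simplex S, poissonRisk S lam P (F P) est

/-!
Given its total `m`, a Poissonized observation with parameter `λ` is the histogram of `m`
i.i.d. draws, and the total is Poisson(`λ`); so the Poisson risk of an estimator is the
Poisson(`λ`)-average over `m` of its risk on the histogram of `m` draws.

From a multinomial estimator `g` we get a Poisson estimator for `λ = 2n`: when `m ≥ n` it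
averages `g`, applied to the first `n` draws, over all samples with the observed histogram.
The histogram is sufficient, so by Jensen this is no worse than `g`. When `m < n` it returns
`0` and pays `F(P)²`, which happens with probability `P(Poi(2n) < n) ≤ e^{-n/4}`.

From a Poisson estimator for `λ = n/2` we get a multinomial one by averaging it over the
histograms of the first `min(N, n)` draws, `N ~ Poi(n/2)`. By Jensen its risk is at most the
average of the risks at fixed sample sizes. The weights of this average exceed the Poisson
weights only at `n`, where the tail bound `P(N ≥ n) ≤ 2 P(N = n)` costs the factor `2`.
-/

open Finset

namespace PoissonMultinomial

lemma add_single_one_eq_iff {ι : Type*} [DecidableEq ι] {a b : ι → ℕ} {i : ι} :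
    a + Pi.single i 1 = b ↔ b i ≠ 0 ∧ a = b - Pi.single i 1 := by
  constructor
  · rintro rfl
    simp
  · rintro ⟨h, rfl⟩
    funext j
    rcases eq_or_ne j i with rfl | hj
    · simp only [Pi.add_apply, Pi.sub_apply, Pi.single_eq_same]
      omega
    · simp [hj]

lemma prod_factorial_eq_mul_prod_factorial_sub_single {ι : Type*} [Fintype ι] [DecidableEq ι]
    {z : ι → ℕ} {i : ι} (hz : z i ≠ 0) :
    ∏ k, (z k).factorial = z i * ∏ k, ((z - Pi.single i 1 : ι → ℕ) k).factorial := by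
  have hrest : ∏ k ∈ univ.erase i, ((z - Pi.single i 1 : ι → ℕ) k).factorial =
      ∏ k ∈ univ.erase i, (z k).factorial :=
    prod_congr rfl fun k hk => by simp [Pi.single_eq_of_ne (ne_of_mem_erase hk)]
  rw [← mul_prod_erase univ _ (mem_univ i), ← mul_prod_erase univ _ (mem_univ i), hrest,
    ← mul_assoc]
  simp [Nat.mul_factorial_pred hz]

variable {S : ℕ}

def counts {m : ℕ} (y : Fin m → Fin S) (i : Fin S) : ℕ := #{j | y j = i}

lemma sum_counts {m : ℕ} (y : Fin m → Fin S) : ∑ i, counts y i = m := by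
  simpa [counts] using (card_eq_sum_card_fiberwise (f := y) (t := univ) (s := univ)
    fun j _ => mem_univ _).symm

lemma counts_cons {m : ℕ} (i : Fin S) (y : Fin m → Fin S) :
    counts (Fin.cons i y : Fin (m + 1) → Fin S) = counts y + Pi.single i 1 := by
  funext k
  simp only [counts, card_filter, Fin.sum_univ_succ, Fin.cons_zero, Fin.cons_succ, Pi.add_apply,
    Pi.single_apply, eq_comm (a := i)]
  ring

lemma card_counts_eq_succ (m : ℕ) (z : Fin S → ℕ) :
    #{y : Fin (m + 1) → Fin S | counts y = z} =
      ∑ i, if z i = 0 then 0 else #{y : Fin m → Fin S | counts y = z - Pi.single i 1} := by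
  simp only [card_filter]
  rw [← (Fin.consEquiv fun _ => Fin S).sum_comp, Fintype.sum_prod_type]
  refine sum_congr rfl fun i _ => ?_
  change (∑ y, if counts (Fin.cons i y : Fin (m + 1) → Fin S) = z then 1 else 0) = _
  simp only [counts_cons, add_single_one_eq_iff]
  split_ifs with hz <;> simp [hz]

theorem card_counts_mul_prod_factorial {m : ℕ} {z : Fin S → ℕ} (hz : ∑ i, z i = m) :
    #{y : Fin m → Fin S | counts y = z} * ∏ i, (z i).factorial = m.factorial := by
  induction m generalizing z with
  | zero =>
    obtain rfl : z = 0 := funext fun i => sum_eq_zero_iff.1 hz i (mem_univ i)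
    have hcounts (y : Fin 0 → Fin S) : counts y = 0 := funext fun i => by simp [counts]
    simp [hcounts]
  | succ m ih =>
    rw [card_counts_eq_succ, sum_mul, Nat.factorial_succ, ← hz, sum_mul]
    refine sum_congr rfl fun i _ => ?_
    split_ifs with hzi
    · simp [hzi]
    · have hsum : ∑ k, (z - Pi.single i 1 : Fin S → ℕ) k = m := by
        have hle : ∀ k ∈ univ, (Pi.single i 1 : Fin S → ℕ) k ≤ z k := fun k _ => by
          rcases eq_or_ne k i with rfl | hk
          · simpa [Nat.one_le_iff_ne_zero] using hzi
          · simp [hk]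
        simp only [Pi.sub_apply]
        rw [sum_tsub_distrib _ hle, sum_pi_single']
        simp only [mem_univ, ↓reduceIte]
        omega
      rw [prod_factorial_eq_mul_prod_factorial_sub_single hzi, mul_left_comm, ih hsum]

lemma multPMF_eq_prod_pow {m : ℕ} (P : Fin S → ℝ) (y : Fin m → Fin S) :
    multPMF S m P y = ∏ i, P i ^ counts y i := by
  rw [multPMF, ← prod_fiberwise univ y]
  refine prod_congr rfl fun i _ => ?_
  rw [prod_congr rfl fun j hj => congrArg P (mem_filter.1 hj).2, prod_const]
  rfl

lemma multPMF_nonneg {m : ℕ} {P : Fin S → ℝ} (hP : ∀ i, 0 ≤ P i) (y : Fin m → Fin S) :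
    0 ≤ multPMF S m P y :=
  prod_nonneg fun j _ => hP (y j)

lemma sum_multPMF (m : ℕ) {P : Fin S → ℝ} (hP : ∑ i, P i = 1) :
    ∑ y : Fin m → Fin S, multPMF S m P y = 1 := by
  simp [multPMF, ← Fintype.prod_sum, hP]

lemma multPMF_append {m k : ℕ} (P : Fin S → ℝ) (y : Fin m → Fin S) (w : Fin k → Fin S) :
    multPMF S (m + k) P (Fin.append y w) = multPMF S m P y * multPMF S k P w := by
  simp [multPMF, Fin.prod_univ_add]

theorem sum_multPMF_mul_comp_castLE {m n : ℕ} (hmn : m ≤ n) {P : Fin S → ℝ}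
    (hP : ∑ i, P i = 1) (h : (Fin m → Fin S) → ℝ) :
    ∑ x : Fin n → Fin S, multPMF S n P x * h (x ∘ Fin.castLE hmn) =
      ∑ y : Fin m → Fin S, multPMF S m P y * h y := by
  obtain ⟨k, rfl⟩ := Nat.exists_eq_add_of_le hmn
  rw [← (Fin.appendEquiv m k).sum_comp, Fintype.sum_prod_type]
  refine sum_congr rfl fun y _ => ?_
  have hy (w : Fin k → Fin S) : Fin.append y w ∘ Fin.castLE hmn = y :=
    funext fun j => Fin.append_left y w j
  dsimp only [Fin.appendEquiv, Equiv.coe_fn_mk]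
  simp only [multPMF_append, hy]
  rw [← sum_mul, ← mul_sum, sum_multPMF k hP, mul_one]

noncomputable def poissonProb (lam : ℝ) (m : ℕ) : ℝ :=
  Real.exp (-lam) * lam ^ m / (Nat.factorial m : ℝ)

lemma poissonProb_nonneg {lam : ℝ} (hlam : 0 ≤ lam) (m : ℕ) : 0 ≤ poissonProb lam m := by
  unfold poissonProb; positivity

lemma hasSum_poissonProb (lam : ℝ) : HasSum (poissonProb lam) 1 := by
  have h := (NormedSpace.expSeries_div_hasSum_exp lam).mul_left (Real.exp (-lam))
  rw [← Real.exp_eq_exp_ℝ, ← Real.exp_add, neg_add_cancel, Real.exp_zero] at h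
  exact (funext fun m => mul_div_assoc _ _ _ : poissonProb lam = _) ▸ h

lemma tsum_ofReal_poissonProb {lam : ℝ} (hlam : 0 ≤ lam) :
    ∑' m, ENNReal.ofReal (poissonProb lam m) = 1 := by
  rw [← ENNReal.ofReal_tsum_of_nonneg (poissonProb_nonneg hlam) (hasSum_poissonProb lam).summable,
    (hasSum_poissonProb lam).tsum_eq, ENNReal.ofReal_one]

lemma poissonProb_succ (lam : ℝ) (m : ℕ) :
    poissonProb lam (m + 1) = poissonProb lam m * (lam / (m + 1)) := by
  simp only [poissonProb, pow_succ, Nat.factorial_succ, Nat.cast_mul, Nat.cast_succ]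
  field_simp

lemma poissonProb_add_le {lam : ℝ} {n : ℕ} (hlam : 0 ≤ lam) (h : 2 * lam ≤ n + 1)
    (i : ℕ) : poissonProb lam (i + n) ≤ poissonProb lam n * (1 / 2) ^ i := by
  induction i with
  | zero => simp
  | succ i ih =>
    have hratio : lam / (↑(i + n) + 1) ≤ 1 / 2 := by
      rw [div_le_iff₀ (by positivity)]
      push_cast
      linarith [(Nat.cast_nonneg i : (0 : ℝ) ≤ i)]
    rw [Nat.add_right_comm, poissonProb_succ, pow_succ, ← mul_assoc]
    exact mul_le_mul ih hratio (div_nonneg hlam (by positivity))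
      (mul_nonneg (poissonProb_nonneg hlam n) (by positivity))

theorem tsum_poissonProb_add_le {lam : ℝ} {n : ℕ} (hlam : 0 ≤ lam) (h : 2 * lam ≤ n + 1) :
    ∑' i, poissonProb lam (i + n) ≤ 2 * poissonProb lam n := by
  calc ∑' i, poissonProb lam (i + n)
      ≤ ∑' i : ℕ, poissonProb lam n * (1 / 2) ^ i :=
        ((summable_nat_add_iff n).2 (hasSum_poissonProb lam).summable).tsum_le_tsum
          (poissonProb_add_le hlam h) (summable_geometric_two.mul_left _)
    _ = 2 * poissonProb lam n := by rw [tsum_mul_left, tsum_geometric_two, mul_comm]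

theorem sum_range_poissonProb_two_mul_le (n : ℕ) :
    ∑ m ∈ range n, poissonProb (2 * n) m ≤ Real.exp (-n / 4) := by
  have two_le : (2 : ℝ) ≤ Real.exp (3 / 4) := by
    rw [← Real.exp_log two_pos, Real.exp_le_exp]; linarith [Real.log_two_lt_d9]
  calc ∑ m ∈ range n, poissonProb (2 * n) m
      ≤ ∑ m ∈ range n, Real.exp (-(2 * n)) * 2 ^ n * ((n : ℝ) ^ m / m.factorial) := by
        refine sum_le_sum fun m hm => ?_
        calc poissonProb (2 * n) m
            = Real.exp (-(2 * n)) * 2 ^ m * ((n : ℝ) ^ m / m.factorial) := by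
              rw [poissonProb]; ring
          _ ≤ _ := by
              gcongr
              · norm_num
              · exact (mem_range.1 hm).le
    _ ≤ Real.exp (-(2 * n)) * 2 ^ n * Real.exp n := by
        rw [← mul_sum]; gcongr; exact Real.sum_le_exp_of_nonneg (by positivity) n
    _ ≤ Real.exp (-(2 * n)) * Real.exp (3 / 4) ^ n * Real.exp n := by gcongr
    _ = Real.exp (-n / 4) := by
        rw [← Real.exp_nat_mul, ← Real.exp_add, ← Real.exp_add]; ring_nf

lemma poissonPMF_eq {lam : ℝ} {P : Fin S → ℝ} (hP : ∑ i, P i = 1) {m : ℕ}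
    {z : Fin S → ℕ} (hz : ∑ i, z i = m) :
    poissonPMF S lam P z =
      poissonProb lam m * #{y : Fin m → Fin S | counts y = z} * ∏ i, P i ^ z i := by
  have hcard : (#{y : Fin m → Fin S | counts y = z} : ℝ) * ∏ i, ((z i).factorial : ℝ) =
      m.factorial := by
    exact_mod_cast card_counts_mul_prod_factorial hz
  have hexp : ∏ i, Real.exp (-(lam * P i)) = Real.exp (-lam) := by
    rw [← Real.exp_sum, sum_neg_distrib, ← mul_sum, hP, mul_one]
  have hpow : ∏ i, (lam * P i) ^ z i = lam ^ m * ∏ i, P i ^ z i := by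
    rw [prod_congr rfl fun i _ => mul_pow lam (P i) (z i), prod_mul_distrib,
      prod_pow_eq_pow_sum, hz]
  have hcard_ne : (#{y : Fin m → Fin S | counts y = z} : ℝ) ≠ 0 := fun h => by
    rw [h, zero_mul] at hcard
    exact Nat.cast_ne_zero.2 (Nat.factorial_ne_zero m) hcard.symm
  rw [poissonPMF, prod_div_distrib, prod_mul_distrib, hexp, hpow, poissonProb, ← hcard]
  field_simp

noncomputable def countRisk (S m : ℕ) (P : Fin S → ℝ) (t : ℝ)
    (est : (Fin S → ℕ) → ℝ) : ℝ :=
  ∑ y : Fin m → Fin S, multPMF S m P y * (est (counts y) - t) ^ 2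

lemma countRisk_nonneg {m : ℕ} {P : Fin S → ℝ} (hP : ∀ i, 0 ≤ P i) (t : ℝ)
    (est : (Fin S → ℕ) → ℝ) : 0 ≤ countRisk S m P t est :=
  sum_nonneg fun y _ => mul_nonneg (multPMF_nonneg hP y) (sq_nonneg _)

lemma multRisk_eq_ofReal {n : ℕ} {P : Fin S → ℝ} (hP : ∀ i, 0 ≤ P i) (t : ℝ)
    (g : (Fin n → Fin S) → ℝ) :
    multRisk S n P t g = ENNReal.ofReal (∑ x, multPMF S n P x * (g x - t) ^ 2) := by
  rw [multRisk, tsum_fintype, ENNReal.ofReal_sum_of_nonneg fun x _ =>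
    mul_nonneg (multPMF_nonneg hP x) (sq_nonneg _)]

theorem poissonRisk_eq_tsum_countRisk {lam : ℝ} (hlam : 0 ≤ lam) {P : Fin S → ℝ}
    (hP : P ∈ simplex S) (t : ℝ) (est : (Fin S → ℕ) → ℝ) :
    poissonRisk S lam P t est =
      ∑' m, ENNReal.ofReal (poissonProb lam m * countRisk S m P t est) := by
  obtain ⟨hP0, hP1⟩ := hP
  have hfiber (m : ℕ) (z : Fin S → ℕ) :
      (if m = ∑ i, z i then ENNReal.ofReal (poissonPMF S lam P z * (est z - t) ^ 2) else 0) =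
        ∑ y ∈ univ.filter (counts · = z),
          ENNReal.ofReal (poissonProb lam m * (multPMF S m P y * (est (counts y) - t) ^ 2)) := by
    split_ifs with hz
    · rw [sum_congr rfl fun y hy => by rw [multPMF_eq_prod_pow, (mem_filter.1 hy).2],
        sum_const, nsmul_eq_mul, ← ENNReal.ofReal_natCast, ← ENNReal.ofReal_mul (by positivity),
        poissonPMF_eq hP1 hz.symm]
      ring_nf
    · rw [filter_eq_empty_iff.2 fun y _ (hy : counts y = z) => hz (hy ▸ (sum_counts y).symm),
        sum_empty]
  have hm (m : ℕ) : ENNReal.ofReal (poissonProb lam m * countRisk S m P t est) =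
      ∑' z, if m = ∑ i, z i then ENNReal.ofReal (poissonPMF S lam P z * (est z - t) ^ 2)
        else 0 := by
    rw [tsum_congr (hfiber m), tsum_eq_sum (s := univ.image counts), sum_fiberwise_of_maps_to
      fun y _ => mem_image_of_mem counts (mem_univ y), countRisk, mul_sum,
      ENNReal.ofReal_sum_of_nonneg]
    · exact fun y _ => mul_nonneg (poissonProb_nonneg hlam m)
        (mul_nonneg (multPMF_nonneg hP0 y) (sq_nonneg _))
    · intro z hz
      rw [filter_eq_empty_iff.2 fun y _ (hy : counts y = z) =>
        hz (hy ▸ mem_image_of_mem counts (mem_univ y)),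
        sum_empty]
  rw [tsum_congr hm, ENNReal.tsum_comm, poissonRisk]
  exact tsum_congr fun z => (tsum_ite_eq (∑ i, z i) fun _ => _).symm

lemma sq_sum_mul_sub_le {ι : Type*} (s : Finset ι) {w : ι → ℝ} (hw : ∀ i ∈ s, 0 ≤ w i)
    (hw1 : ∑ i ∈ s, w i = 1) (a : ι → ℝ) (t : ℝ) :
    (∑ i ∈ s, w i * a i - t) ^ 2 ≤ ∑ i ∈ s, w i * (a i - t) ^ 2 := by
  have h := (even_two.convexOn_pow (𝕜 := ℝ)).map_sum_le hw hw1 (p := fun i => a i - t)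
    fun _ _ => Set.mem_univ _
  simp only [smul_eq_mul, mul_sub, sum_sub_distrib, ← sum_mul, hw1, one_mul] at h
  exact h

section FiberAverage

variable {α β : Type*} [Fintype α] [DecidableEq β]

noncomputable def fiberAvg (c : α → β) (q : α → ℝ) (b : β) : ℝ :=
  (∑ y with c y = b, q y) / #{y | c y = b}

theorem sum_mul_sq_fiberAvg_sub_le (c : α → β) {p : β → ℝ} (hp : ∀ b, 0 ≤ p b)
    (q : α → ℝ) (t : ℝ) :
    ∑ y, p (c y) * (fiberAvg c q (c y) - t) ^ 2 ≤ ∑ y, p (c y) * (q y - t) ^ 2 := by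
  have hmaps : ∀ y ∈ univ, c y ∈ univ.image c := fun y _ => mem_image_of_mem c (mem_univ y)
  rw [← sum_fiberwise_of_maps_to hmaps, ← sum_fiberwise_of_maps_to hmaps]
  refine sum_le_sum fun b hb => ?_
  set F := ({y | c y = b} : Finset α)
  have hc : ∀ y ∈ F, c y = b := fun y hy => (mem_filter.1 hy).2
  have hL : ∑ y ∈ F, p (c y) * (fiberAvg c q (c y) - t) ^ 2 =
      p b * (#F * (fiberAvg c q b - t) ^ 2) := by
    rw [sum_congr rfl fun y hy => by rw [hc y hy], sum_const, nsmul_eq_mul, mul_left_comm]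
  have hR : ∑ y ∈ F, p (c y) * (q y - t) ^ 2 = p b * ∑ y ∈ F, (q y - t) ^ 2 := by
    rw [mul_sum]; exact sum_congr rfl fun y hy => by rw [hc y hy]
  rw [hL, hR]
  refine mul_le_mul_of_nonneg_left ?_ (hp b)
  obtain ⟨y₀, -, rfl⟩ := mem_image.1 hb
  have hN : (0 : ℝ) < #F := by exact_mod_cast card_pos.2 ⟨y₀, by simp [F]⟩
  have hjensen := sq_sum_mul_sub_le F (w := fun _ => 1 / (#F : ℝ)) (fun _ _ => by positivity)
    (by rw [sum_const, nsmul_eq_mul]; field_simp) q t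
  rw [← mul_sum, ← mul_sum, one_div_mul_eq_div, one_div_mul_eq_div] at hjensen
  rw [fiberAvg]
  calc (#F : ℝ) * ((∑ y ∈ F, q y) / #F - t) ^ 2
      ≤ #F * ((∑ y ∈ F, (q y - t) ^ 2) / #F) :=
        mul_le_mul_of_nonneg_left hjensen hN.le
    _ = ∑ y ∈ F, (q y - t) ^ 2 := by field_simp

end FiberAverage

/-- The law of `min N n` for `N ~ Poisson lam`. -/
noncomputable def truncPoissonProb (lam : ℝ) (n m : ℕ) : ℝ :=
  if m < n then poissonProb lam m else ∑' i, poissonProb lam (i + n)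

lemma truncPoissonProb_nonneg {lam : ℝ} (hlam : 0 ≤ lam) (n m : ℕ) :
    0 ≤ truncPoissonProb lam n m := by
  unfold truncPoissonProb
  split_ifs
  · exact poissonProb_nonneg hlam m
  · exact tsum_nonneg fun i => poissonProb_nonneg hlam _

lemma sum_range_truncPoissonProb (lam : ℝ) (n : ℕ) :
    ∑ m ∈ range (n + 1), truncPoissonProb lam n m = 1 := by
  have hhead : ∑ m ∈ range n, truncPoissonProb lam n m = ∑ m ∈ range n, poissonProb lam m :=
    sum_congr rfl fun m hm => if_pos (mem_range.1 hm)
  rw [sum_range_succ, hhead, truncPoissonProb,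
    if_neg (lt_irrefl n), (hasSum_poissonProb lam).summable.sum_add_tsum_nat_add,
    (hasSum_poissonProb lam).tsum_eq]

lemma truncPoissonProb_le {lam : ℝ} {n : ℕ} (hlam : 0 ≤ lam) (h : 2 * lam ≤ n + 1) {m : ℕ}
    (hm : m ≤ n) : truncPoissonProb lam n m ≤ 2 * poissonProb lam m := by
  unfold truncPoissonProb
  split_ifs with hmn
  · linarith [poissonProb_nonneg hlam m]
  · obtain rfl : m = n := le_antisymm hm (not_lt.1 hmn)
    exact tsum_poissonProb_add_le hlam h

noncomputable def subsampledEst (lam : ℝ) (n : ℕ) (est : (Fin S → ℕ) → ℝ)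
    (x : Fin n → Fin S) : ℝ :=
  ∑ m : Fin (n + 1), truncPoissonProb lam n m * est (counts (x ∘ Fin.castLE m.is_le))

lemma sum_multPMF_mul_sq_subsampledEst_sub_le {lam : ℝ} {n : ℕ} (hlam : 0 ≤ lam)
    {P : Fin S → ℝ} (hP : P ∈ simplex S) (t : ℝ) (est : (Fin S → ℕ) → ℝ) :
    ∑ x, multPMF S n P x * (subsampledEst lam n est x - t) ^ 2 ≤
      ∑ m ∈ range (n + 1), truncPoissonProb lam n m * countRisk S m P t est := by
  have hw1 : ∑ m : Fin (n + 1), truncPoissonProb lam n m = 1 := by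
    rw [Fin.sum_univ_eq_sum_range (truncPoissonProb lam n), sum_range_truncPoissonProb]
  rw [← Fin.sum_univ_eq_sum_range (fun m => truncPoissonProb lam n m * countRisk S m P t est)]
  unfold subsampledEst
  calc _ ≤ ∑ x, multPMF S n P x * ∑ m : Fin (n + 1),
          truncPoissonProb lam n m * (est (counts (x ∘ Fin.castLE m.is_le)) - t) ^ 2 :=
        sum_le_sum fun x _ => mul_le_mul_of_nonneg_left
          (sq_sum_mul_sub_le univ (w := fun m : Fin (n + 1) => truncPoissonProb lam n m)
            (fun m _ => truncPoissonProb_nonneg hlam n m) hw1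
            (fun m => est (counts (x ∘ Fin.castLE m.is_le))) t) (multPMF_nonneg hP.1 x)
    _ = ∑ m : Fin (n + 1), truncPoissonProb lam n m * ∑ x,
          multPMF S n P x * (est (counts (x ∘ Fin.castLE m.is_le)) - t) ^ 2 := by
        simp only [mul_sum]
        rw [sum_comm]
        exact sum_congr rfl fun m _ => sum_congr rfl fun x _ => by ring
    _ = _ := by
        refine sum_congr rfl fun m _ => ?_
        rw [sum_multPMF_mul_comp_castLE m.is_le hP.2 fun y => (est (counts y) - t) ^ 2,
          countRisk]

theorem multRisk_subsampledEst_le {lam : ℝ} {n : ℕ} (hlam : 0 ≤ lam) (h : 2 * lam ≤ n + 1)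
    {P : Fin S → ℝ} (hP : P ∈ simplex S) (t : ℝ) (est : (Fin S → ℕ) → ℝ) :
    multRisk S n P t (subsampledEst lam n est) ≤ 2 * poissonRisk S lam P t est := by
  have hR (m : ℕ) := countRisk_nonneg (m := m) hP.1 t est
  rw [multRisk_eq_ofReal hP.1, poissonRisk_eq_tsum_countRisk hlam hP]
  calc _ ≤ ENNReal.ofReal
        (2 * ∑ m ∈ range (n + 1), poissonProb lam m * countRisk S m P t est) := by
        refine ENNReal.ofReal_le_ofReal
          ((sum_multPMF_mul_sq_subsampledEst_sub_le hlam hP t est).trans ?_)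
        rw [mul_sum]
        exact sum_le_sum fun m hm => by
          rw [← mul_assoc]
          exact mul_le_mul_of_nonneg_right
            (truncPoissonProb_le hlam h (Nat.lt_succ_iff.1 (mem_range.1 hm))) (hR m)
    _ = 2 * ∑ m ∈ range (n + 1),
          ENNReal.ofReal (poissonProb lam m * countRisk S m P t est) := by
        rw [ENNReal.ofReal_mul zero_le_two, ENNReal.ofReal_ofNat, ENNReal.ofReal_sum_of_nonneg
          fun m _ => mul_nonneg (poissonProb_nonneg hlam m) (hR m)]
    _ ≤ _ := by gcongr; exact ENNReal.sum_le_tsum _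

noncomputable def averagedEst (n : ℕ) (g : (Fin n → Fin S) → ℝ) (z : Fin S → ℕ) : ℝ :=
  if h : n ≤ ∑ i, z i then
    fiberAvg counts (fun y : Fin (∑ i, z i) → Fin S => g (y ∘ Fin.castLE h)) z
  else 0

lemma averagedEst_eq {n m : ℕ} (hnm : n ≤ m) (g : (Fin n → Fin S) → ℝ) {z : Fin S → ℕ}
    (hz : ∑ i, z i = m) :
    averagedEst n g z =
      fiberAvg counts (fun y : Fin m → Fin S => g (y ∘ Fin.castLE hnm)) z := by
  subst hz
  exact dif_pos hnm

lemma countRisk_averagedEst_of_lt {n m : ℕ} (hmn : m < n) {P : Fin S → ℝ}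
    (hP : ∑ i, P i = 1) (t : ℝ) (g : (Fin n → Fin S) → ℝ) :
    countRisk S m P t (averagedEst n g) = t ^ 2 := by
  have hzero (y : Fin m → Fin S) : averagedEst n g (counts y) = 0 :=
    dif_neg (by rw [sum_counts]; omega)
  simp only [countRisk, hzero, zero_sub, neg_sq, ← sum_mul, sum_multPMF m hP, one_mul]

lemma countRisk_averagedEst_le {n m : ℕ} (hnm : n ≤ m) {P : Fin S → ℝ}
    (hP : P ∈ simplex S) (t : ℝ) (g : (Fin n → Fin S) → ℝ) :
    countRisk S m P t (averagedEst n g) ≤ ∑ x, multPMF S n P x * (g x - t) ^ 2 := by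
  obtain ⟨hP0, hP1⟩ := hP
  have hest (y : Fin m → Fin S) : averagedEst n g (counts y) =
      fiberAvg counts (fun y : Fin m → Fin S => g (y ∘ Fin.castLE hnm)) (counts y) :=
    averagedEst_eq hnm g (sum_counts y)
  simp only [countRisk, hest, multPMF_eq_prod_pow]
  calc _ ≤ ∑ y : Fin m → Fin S,
        (∏ i, P i ^ counts y i) * (g (y ∘ Fin.castLE hnm) - t) ^ 2 :=
        sum_mul_sq_fiberAvg_sub_le counts (p := fun z => ∏ i, P i ^ z i)
          (fun z => prod_nonneg fun i _ => pow_nonneg (hP0 i) _) _ t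
    _ = _ := by
        simp only [← multPMF_eq_prod_pow]
        exact sum_multPMF_mul_comp_castLE hnm hP1 fun x => (g x - t) ^ 2

theorem poissonRisk_averagedEst_le {lam : ℝ} (hlam : 0 ≤ lam) (n : ℕ) {P : Fin S → ℝ}
    (hP : P ∈ simplex S) (t : ℝ) (g : (Fin n → Fin S) → ℝ) :
    poissonRisk S lam P t (averagedEst n g) ≤
      multRisk S n P t g + ENNReal.ofReal ((∑ m ∈ range n, poissonProb lam m) * t ^ 2) := by
  set R := ∑ x, multPMF S n P x * (g x - t) ^ 2
  have hterm (m : ℕ) :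
      ENNReal.ofReal (poissonProb lam m * countRisk S m P t (averagedEst n g)) ≤
        (if m < n then ENNReal.ofReal (poissonProb lam m * t ^ 2) else 0) +
          ENNReal.ofReal (poissonProb lam m) * ENNReal.ofReal R := by
    split_ifs with hmn
    · rw [countRisk_averagedEst_of_lt hmn hP.2]
      exact le_self_add
    · rw [zero_add, ← ENNReal.ofReal_mul (poissonProb_nonneg hlam m)]
      exact ENNReal.ofReal_le_ofReal (mul_le_mul_of_nonneg_left
        (countRisk_averagedEst_le (not_lt.1 hmn) hP t g) (poissonProb_nonneg hlam m))
  have hhead : ∑' m, (if m < n then ENNReal.ofReal (poissonProb lam m * t ^ 2) else 0) =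
      ENNReal.ofReal ((∑ m ∈ range n, poissonProb lam m) * t ^ 2) := by
    rw [tsum_eq_sum (s := range n) fun m hm => if_neg (mem_range.not.1 hm),
      sum_congr rfl fun m hm => if_pos (mem_range.1 hm), sum_mul, ENNReal.ofReal_sum_of_nonneg
      fun m _ => mul_nonneg (poissonProb_nonneg hlam m) (sq_nonneg t)]
  rw [poissonRisk_eq_tsum_countRisk hlam hP, multRisk_eq_ofReal hP.1]
  calc _ ≤ _ := ENNReal.tsum_le_tsum hterm
    _ = _ := by
        rw [ENNReal.tsum_add, ENNReal.tsum_mul_right, tsum_ofReal_poissonProb hlam, one_mul,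
          hhead, add_comm]

end PoissonMultinomial

open PoissonMultinomial

theorem poisson_multinomial_minimax_comparison_general
    (S n : ℕ)
    (F : (Fin S → ℝ) → ℝ) :
    poissonMinimax S (2 * (n : ℝ)) F -
        ENNReal.ofReal (Real.exp (-(n : ℝ) / 4)) *
          (⨆ P ∈ simplex S, ENNReal.ofReal ((F P) ^ 2))
      ≤ multMinimax S n F ∧
    multMinimax S n F ≤ 2 * poissonMinimax S ((n : ℝ) / 2) F := by
  constructor
  · rw [tsub_le_iff_right, multMinimax, ENNReal.iInf_add]
    refine le_iInf fun g => (iInf_le _ (averagedEst n g)).trans (iSup₂_le fun P hP => ?_)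
    refine (poissonRisk_averagedEst_le (by positivity) n hP (F P) g).trans ?_
    rw [ENNReal.ofReal_mul (sum_nonneg fun m _ => poissonProb_nonneg (by positivity) m)]
    gcongr
    · exact le_iSup₂ (f := fun P _ => multRisk S n P (F P) g) P hP
    · exact sum_range_poissonProb_two_mul_le n
    · exact le_iSup₂ (f := fun P _ => ENNReal.ofReal (F P ^ 2)) P hP
  · rw [poissonMinimax, ENNReal.mul_iInf_of_ne two_ne_zero ENNReal.ofNat_ne_top]
    refine le_iInf fun est =>
      (iInf_le _ (subsampledEst (n / 2) n est)).trans (iSup₂_le fun P hP => ?_)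
    refine (multRisk_subsampledEst_le (by positivity) (by linarith) hP (F P) est).trans ?_
    gcongr
    exact le_iSup₂ (f := fun P _ => poissonRisk S (n / 2) P (F P) est) P hP

theorem poisson_multinomial_minimax_comparison
    (S n : ℕ) (hS : 1 ≤ S) (hn : 1 ≤ n)
    (F : (Fin S → ℝ) → ℝ) (hF : ∃ B : ℝ, ∀ P ∈ simplex S, |F P| ≤ B) :
    poissonMinimax S (2 * (n : ℝ)) F -
        ENNReal.ofReal (Real.exp (-(n : ℝ) / 4)) *
          (⨆ P ∈ simplex S, ENNReal.ofReal ((F P) ^ 2))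
      ≤ multMinimax S n F ∧
    multMinimax S n F ≤ 2 * poissonMinimax S ((n : ℝ) / 2) F :=
  poisson_multinomial_minimax_comparison_general S n F
end

section
/- For every α ∈ (0, 1) and every integer L ≥ 1 there exist Borel probability measures ν₀ and ν₁ on the interval [0, 1] such that (i) ∫ t^l dν₁(t) = ∫ t^l dν₀(t) for every integer l with 0 ≤ l ≤ L, and (ii) ∫ t^α dν₁(t) − ∫ t^α dν₀(t) = 2·E_L[x^α]_{[0,1]}. -/
open scoped BigOperators

/-- Best uniform polynomial approximation error of `f` on `[a, b]` by real polynomials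
of degree at most `L`. -/
noncomputable def approxErr (f : ℝ → ℝ) (L : ℕ) (a b : ℝ) : ℝ :=
  ⨅ p : {p : Polynomial ℝ // p.natDegree ≤ L},
    ⨆ x : Set.Icc a b, |f (x : ℝ) - (p : Polynomial ℝ).eval (x : ℝ)|

open MeasureTheory

/-!
This is linear programming duality for best uniform approximation, with `E = E_L[f]_{[a,b]}`.
Weak duality: if `ν₀` and `ν₁` have the same moments up to `L`, then
`∫ f d(ν₁ - ν₀) = ∫ (f - p) d(ν₁ - ν₀) ≤ 2 ‖f - p‖` for every `p` of degree `≤ L`.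
Strong duality: the convex hull of the points `((x ^ l - y ^ l)_{l ≤ L}, f x - f y)`,
`x, y ∈ [a, b]`, is compact and meets the ray `{0} × [2 E, ∞)`. Otherwise a separating
functional yields a polynomial `p` for which `f - p` oscillates by less than `2 E` on `[a, b]`,
and shifting `p` by a constant would then approximate `f` better than `E`. A point of the hull
on that ray is a finite convex combination; its weights placed at the `x`'s and at the `y`'s
are `ν₁` and `ν₀`.
-/

open Set Polynomial

/-- By Carathéodory, the hull is the image of `stdSimplex × sᴺ` under `(w, z) ↦ ∑ wᵢ zᵢ`
with `N = finrank + 1`. -/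
theorem IsCompact.convexHull {E : Type*} [NormedAddCommGroup E] [NormedSpace ℝ E]
    [FiniteDimensional ℝ E] {s : Set E} (hs : IsCompact s) : IsCompact (convexHull ℝ s) := by
  rcases s.eq_empty_or_nonempty with rfl | ⟨x₀, hx₀⟩
  · simp
  set N := Module.finrank ℝ E + 1
  let Φ : (Fin N → ℝ) × (Fin N → E) → E := fun p => ∑ i, p.1 i • p.2 i
  suffices _root_.convexHull ℝ s = Φ '' (stdSimplex ℝ (Fin N) ×ˢ univ.pi fun _ => s) by
    rw [this]
    exact ((isCompact_stdSimplex _ _).prod (isCompact_univ_pi fun _ => hs)).image (by fun_prop)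
  refine Subset.antisymm (fun x hx => ?_) ?_
  · obtain ⟨ι, _, z, w, hzs, hz, hw0, hw1, rfl⟩ := eq_pos_convex_span_of_mem_convexHull hx
    have hcard : Fintype.card ι ≤ Fintype.card (Fin N) := by
      simpa [N] using hz.card_le_finrank_succ.trans (by gcongr; exact Submodule.finrank_le _)
    obtain ⟨e⟩ := Function.Embedding.nonempty_of_card_le hcard
    refine ⟨(Function.extend e w 0, Function.extend e z fun _ => x₀),
      ⟨⟨fun j => ?_, ?_⟩, fun j _ => ?_⟩, ?_⟩
    · by_cases hj : j ∈ range e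
      · obtain ⟨i, rfl⟩ := hj
        simpa [e.injective.extend_apply] using (hw0 i).le
      · simp [Function.extend_apply' _ _ _ hj]
    · rw [← hw1]
      exact (Fintype.sum_of_injective e e.injective _ _
        (fun j hj => by simp [Function.extend_apply' _ _ _ hj])
        fun i => (e.injective.extend_apply _ _ _).symm).symm
    · by_cases hj : j ∈ range e
      · obtain ⟨i, rfl⟩ := hj
        simpa [e.injective.extend_apply] using hzs (mem_range_self i)
      · simpa [Function.extend_apply' _ _ _ hj] using hx₀
    · exact (Fintype.sum_of_injective e e.injective _ _
        (fun j hj => by simp [Function.extend_apply' _ _ _ hj])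
        fun i => by simp [e.injective.extend_apply]).symm
  · rintro _ ⟨⟨w, z⟩, ⟨hw, hz⟩, rfl⟩
    exact (convex_convexHull ℝ s).sum_mem (fun i _ => hw.1 i) hw.2
      fun i _ => subset_convexHull ℝ s (hz i trivial)

theorem exists_le_and_zero_prod_mem_convexHull {V : Type*} [NormedAddCommGroup V]
    [NormedSpace ℝ V] [FiniteDimensional ℝ V] {S : Set (V × ℝ)} (hS : IsCompact S)
    (h0 : 0 ∈ S) {r : ℝ} (hr : 0 ≤ r) (h : ∀ ℓ : V →L[ℝ] ℝ, ∃ z ∈ S, r ≤ z.2 + ℓ z.1) :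
    ∃ t, r ≤ t ∧ (0, t) ∈ convexHull ℝ S := by
  by_contra! hB
  have hdisj : Disjoint (convexHull ℝ S) ({0} ×ˢ Ici r) := by
    rw [Set.disjoint_right]
    rintro ⟨v, t⟩ ⟨rfl, ht⟩
    exact hB t ht
  obtain ⟨F, u, v, hFu, huv, hvF⟩ := geometric_hahn_banach_compact_closed
    (convex_convexHull ℝ S) hS.convexHull ((convex_singleton 0).prod (convex_Ici r))
    (isClosed_singleton.prod isClosed_Ici) hdisj
  set c := F (0, 1)
  have hF : ∀ z : V × ℝ, F z = F (z.1, 0) + z.2 * c := fun z => by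
    rw [← smul_eq_mul, ← map_smul, ← map_add]
    simp
  have hu : 0 < u := by simpa using hFu 0 (subset_convexHull ℝ S h0)
  have hv : v < r * c := by
    simpa [hF (0, r), Prod.mk_zero_zero] using hvF (0, r) ⟨rfl, le_refl r⟩
  have hc : 0 < c := pos_of_mul_pos_right (hu.trans (huv.trans hv)) hr
  obtain ⟨z, hzS, hz⟩ := h (c⁻¹ • F.comp (ContinuousLinearMap.inl ℝ V ℝ))
  have : r * c ≤ F z :=
    calc r * c ≤ (z.2 + c⁻¹ * F (z.1, 0)) * c := by gcongr; simpa using hz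
      _ = F z := by rw [hF z]; field_simp; ring
  linarith [hFu z (subset_convexHull ℝ S hzS)]

def momentCurve {R : Type*} [Monoid R] (L : ℕ) (x : R) : Fin (L + 1) → R :=
  fun i => x ^ (i : ℕ)

theorem exists_natDegree_le_eval_eq {R : Type*} [CommRing R] (L : ℕ)
    (ℓ : (Fin (L + 1) → R) →ₗ[R] R) :
    ∃ q : R[X], q.natDegree ≤ L ∧ ∀ x, ℓ (momentCurve L x) = q.eval x := by
  refine ⟨∑ i : Fin (L + 1), C (ℓ fun j => if i = j then 1 else 0) * X ^ (i : ℕ),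
    natDegree_sum_le_of_forall_le _ _ fun i _ => natDegree_C_mul_X_pow_le _ _ |>.trans
      (Nat.lt_succ_iff.1 i.2), fun x => ?_⟩
  unfold momentCurve
  rw [LinearMap.pi_apply_eq_sum_univ, eval_finsetSum]
  refine Finset.sum_congr rfl fun i _ => ?_
  rw [eval_mul, eval_C, eval_pow, eval_X, smul_eq_mul, mul_comm]

section approxErr

variable {f : ℝ → ℝ} {L : ℕ} {a b : ℝ}

theorem approxErr_nonneg : 0 ≤ approxErr f L a b :=
  Real.iInf_nonneg fun _ => Real.iSup_nonneg fun _ => abs_nonneg _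

theorem approxErr_le (hab : a ≤ b) {p : ℝ[X]} (hp : p.natDegree ≤ L) {C : ℝ}
    (hC : ∀ x ∈ Icc a b, |f x - p.eval x| ≤ C) : approxErr f L a b ≤ C := by
  have : Nonempty (Icc a b) := (nonempty_Icc.2 hab).to_subtype
  refine (ciInf_le ⟨0, ?_⟩ (⟨p, hp⟩ : {p : ℝ[X] // p.natDegree ≤ L})).trans
    (ciSup_le fun x => hC x x.2)
  rintro _ ⟨q, rfl⟩
  exact Real.iSup_nonneg fun _ => abs_nonneg _

theorem le_approxErr (hf : ContinuousOn f (Icc a b)) {C : ℝ}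
    (hC : ∀ p : ℝ[X], p.natDegree ≤ L → ∀ M, (∀ x ∈ Icc a b, |f x - p.eval x| ≤ M) → C ≤ M) :
    C ≤ approxErr f L a b := by
  have : Nonempty {p : ℝ[X] // p.natDegree ≤ L} := ⟨⟨0, by simp⟩⟩
  refine le_ciInf fun ⟨p, hp⟩ => hC p hp _ fun x hx =>
    le_ciSup (f := fun y : Icc a b => |f y - p.eval (y : ℝ)|) ?_ ⟨x, hx⟩
  obtain ⟨M, hM⟩ := isCompact_Icc.exists_bound_of_continuousOn (hf.sub p.continuousOn)
  exact ⟨M, by rintro _ ⟨y, rfl⟩; exact hM y y.2⟩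

theorem two_mul_approxErr_le_sub (hf : ContinuousOn f (Icc a b)) (hab : a ≤ b) {p : ℝ[X]}
    (hp : p.natDegree ≤ L) : ∃ x ∈ Icc a b, ∃ y ∈ Icc a b,
      2 * approxErr f L a b ≤ (f x - p.eval x) - (f y - p.eval y) := by
  set g := fun x => f x - p.eval x
  have hg : ContinuousOn g (Icc a b) := hf.sub p.continuousOn
  obtain ⟨x, hx, hmax⟩ := isCompact_Icc.exists_isMaxOn (nonempty_Icc.2 hab) hg
  obtain ⟨y, hy, hmin⟩ := isCompact_Icc.exists_isMinOn (nonempty_Icc.2 hab) hg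
  refine ⟨x, hx, y, hy, ?_⟩
  have : approxErr f L a b ≤ (g x - g y) / 2 :=
    approxErr_le hab (p := p + C ((g x + g y) / 2)) (by rwa [natDegree_add_C]) fun z hz => by
      have h₁ : g z ≤ g x := hmax hz
      have h₂ : g y ≤ g z := hmin hz
      rw [abs_le, eval_add, eval_C]
      constructor <;> linarith
  linarith

end approxErr

section Measure

variable {α : Type*} [MeasurableSpace α] {ν : Measure α} {s : Set α}

theorem abs_integral_le_of_measure_compl_eq_zero [IsProbabilityMeasure ν] (hν : ν sᶜ = 0)
    {g : α → ℝ} {M : ℝ} (hM : ∀ x ∈ s, |g x| ≤ M) : |∫ x, g x ∂ν| ≤ M := by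
  have hae : ∀ᵐ x ∂ν, x ∈ s := ae_iff.2 hν
  simpa using norm_integral_le_of_norm_le_const (f := g) (hae.mono fun x hx => hM x hx)

theorem integrable_of_measure_compl_eq_zero [TopologicalSpace α] [OpensMeasurableSpace α]
    [T2Space α] [IsFiniteMeasure ν] (hs : IsCompact s) (hν : ν sᶜ = 0)
    {g : α → ℝ} (hg : ContinuousOn g s) : Integrable g ν := by
  rw [← Measure.restrict_eq_self_of_ae_mem (ae_iff.2 hν : ∀ᵐ x ∂ν, x ∈ s)]
  exact hg.integrableOn_compact hs

variable {ι : Type*} [Fintype ι] {w : ι → ℝ} (x : ι → α)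

theorem isProbabilityMeasure_sum_smul_dirac (hw0 : ∀ i, 0 ≤ w i) (hw1 : ∑ i, w i = 1) :
    IsProbabilityMeasure (∑ i, ENNReal.ofReal (w i) • Measure.dirac (x i)) := by
  constructor
  simp [← ENNReal.ofReal_sum_of_nonneg fun i _ => hw0 i, hw1]

theorem sum_smul_dirac_compl_eq_zero [MeasurableSingletonClass α] (hx : ∀ i, x i ∈ s) :
    (∑ i, ENNReal.ofReal (w i) • Measure.dirac (x i)) sᶜ = 0 := by
  simp [hx]

theorem integral_sum_smul_dirac [MeasurableSingletonClass α] (hw0 : ∀ i, 0 ≤ w i)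
    (g : α → ℝ) :
    ∫ a, g a ∂(∑ i, ENNReal.ofReal (w i) • Measure.dirac (x i)) = ∑ i, w i * g (x i) := by
  rw [integral_finsetSum_measure fun i _ =>
    (integrable_dirac enorm_lt_top).smul_measure ENNReal.ofReal_ne_top]
  simp [integral_smul_measure, ENNReal.toReal_ofReal (hw0 _)]

end Measure

theorem integral_eval_eq_of_integral_pow_eq {ν₀ ν₁ : Measure ℝ} {L : ℕ}
    (h₀ : ∀ l ≤ L, Integrable (fun t => t ^ l) ν₀)
    (h₁ : ∀ l ≤ L, Integrable (fun t => t ^ l) ν₁)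
    (hmom : ∀ l ≤ L, ∫ t, t ^ l ∂ν₁ = ∫ t, t ^ l ∂ν₀) {p : ℝ[X]} (hp : p.natDegree ≤ L) :
    ∫ t, p.eval t ∂ν₁ = ∫ t, p.eval t ∂ν₀ := by
  have expand : ∀ ν : Measure ℝ, (∀ l ≤ L, Integrable (fun t => t ^ l) ν) →
      ∫ t, p.eval t ∂ν = ∑ l ∈ Finset.range (L + 1), p.coeff l * ∫ t, t ^ l ∂ν :=
    fun ν hν => by
    simp_rw [eval_eq_sum_range' (Nat.lt_succ_of_le hp)]
    rw [integral_finsetSum _ fun l hl =>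
      (hν l (Nat.lt_succ_iff.1 (Finset.mem_range.1 hl))).const_mul _]
    simp_rw [integral_const_mul]
  rw [expand ν₁ h₁, expand ν₀ h₀]
  exact Finset.sum_congr rfl fun l hl => by
    rw [hmom l (Nat.lt_succ_iff.1 (Finset.mem_range.1 hl))]

theorem integral_sub_integral_le_two_mul_approxErr {f : ℝ → ℝ} {L : ℕ} {a b : ℝ}
    (hf : ContinuousOn f (Icc a b)) {ν₀ ν₁ : Measure ℝ} [IsProbabilityMeasure ν₀]
    [IsProbabilityMeasure ν₁] (h₀ : ν₀ (Icc a b)ᶜ = 0) (h₁ : ν₁ (Icc a b)ᶜ = 0)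
    (hmom : ∀ l ≤ L, ∫ t, t ^ l ∂ν₁ = ∫ t, t ^ l ∂ν₀) :
    ∫ t, f t ∂ν₁ - ∫ t, f t ∂ν₀ ≤ 2 * approxErr f L a b := by
  rw [← div_le_iff₀' two_pos]
  refine le_approxErr hf fun p hp M hM => ?_
  have hp_eq : ∫ t, p.eval t ∂ν₁ = ∫ t, p.eval t ∂ν₀ :=
    integral_eval_eq_of_integral_pow_eq
      (fun l _ => integrable_of_measure_compl_eq_zero isCompact_Icc h₀ (continuousOn_pow l))
      (fun l _ => integrable_of_measure_compl_eq_zero isCompact_Icc h₁ (continuousOn_pow l))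
      hmom hp
  have hsub : ∀ ν : Measure ℝ, [IsProbabilityMeasure ν] → ν (Icc a b)ᶜ = 0 →
      ∫ t, f t - p.eval t ∂ν = ∫ t, f t ∂ν - ∫ t, p.eval t ∂ν := fun ν _ hν =>
    integral_sub (integrable_of_measure_compl_eq_zero isCompact_Icc hν hf)
      (integrable_of_measure_compl_eq_zero isCompact_Icc hν p.continuousOn)
  have b₀ := abs_integral_le_of_measure_compl_eq_zero h₀ hM
  have b₁ := abs_integral_le_of_measure_compl_eq_zero h₁ hM
  rw [hsub ν₀ h₀, abs_le] at b₀
  rw [hsub ν₁ h₁, abs_le] at b₁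
  linarith [b₀.1, b₁.2]

theorem exists_isProbabilityMeasure_of_mem_convexHull_image_sub {α E : Type*}
    [MeasurableSpace α] [MeasurableSingletonClass α] [AddCommGroup E] [Module ℝ E]
    {g : α → E} {s : Set α} {z : E}
    (hz : z ∈ convexHull ℝ ((fun p : α × α => g p.1 - g p.2) '' s ×ˢ s)) :
    ∃ ν₀ ν₁ : Measure α, IsProbabilityMeasure ν₀ ∧ IsProbabilityMeasure ν₁ ∧
      ν₀ sᶜ = 0 ∧ ν₁ sᶜ = 0 ∧
      ∀ Λ : E →ₗ[ℝ] ℝ, ∫ x, Λ (g x) ∂ν₁ - ∫ x, Λ (g x) ∂ν₀ = Λ z := by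
  obtain ⟨ι, _, w, z, hw0, hw1, hzS, rfl⟩ := mem_convexHull_iff_exists_fintype.1 hz
  choose p hp hpz using hzS
  refine ⟨_, _, isProbabilityMeasure_sum_smul_dirac _ hw0 hw1,
    isProbabilityMeasure_sum_smul_dirac _ hw0 hw1,
    sum_smul_dirac_compl_eq_zero _ fun i => (hp i).2,
    sum_smul_dirac_compl_eq_zero _ fun i => (hp i).1, fun Λ => ?_⟩
  rw [integral_sum_smul_dirac _ hw0, integral_sum_smul_dirac _ hw0, ← Finset.sum_sub_distrib,
    map_sum]
  refine Finset.sum_congr rfl fun i _ => ?_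
  rw [← hpz i, map_smul, map_sub, smul_eq_mul, mul_sub]

theorem exists_two_mul_approxErr_le_mem_convexHull {f : ℝ → ℝ} {a b : ℝ}
    (hf : ContinuousOn f (Icc a b)) (hab : a ≤ b) (L : ℕ) :
    ∃ t, 2 * approxErr f L a b ≤ t ∧ ((0 : Fin (L + 1) → ℝ), t) ∈ convexHull ℝ
      ((fun p : ℝ × ℝ => (momentCurve L p.1, f p.1) - (momentCurve L p.2, f p.2)) ''
        Icc a b ×ˢ Icc a b) := by
  have hg : ContinuousOn (fun x => (momentCurve L x, f x)) (Icc a b) :=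
    (show Continuous (momentCurve (R := ℝ) L) from
      continuous_pi fun i => continuous_pow (i : ℕ)).continuousOn.prodMk hf
  have hS : IsCompact ((fun p : ℝ × ℝ => (momentCurve L p.1, f p.1) -
      (momentCurve L p.2, f p.2)) '' Icc a b ×ˢ Icc a b) :=
    (isCompact_Icc.prod isCompact_Icc).image_of_continuousOn <|
      (hg.comp continuousOn_fst fun _ hp => hp.1).sub
        (hg.comp continuousOn_snd fun _ hp => hp.2)
  refine exists_le_and_zero_prod_mem_convexHull hS
    ⟨(a, a), ⟨left_mem_Icc.2 hab, left_mem_Icc.2 hab⟩, sub_self _⟩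
    (mul_nonneg zero_le_two approxErr_nonneg) fun ℓ => ?_
  obtain ⟨q, hq, hqℓ⟩ := exists_natDegree_le_eval_eq L (ℓ : (Fin (L + 1) → ℝ) →ₗ[ℝ] ℝ)
  obtain ⟨x, hx, y, hy, hxy⟩ :=
    two_mul_approxErr_le_sub (L := L) hf hab (p := -q) (by rwa [natDegree_neg])
  refine ⟨_, ⟨(x, y), ⟨hx, hy⟩, rfl⟩, ?_⟩
  have hℓ : ∀ x, ℓ (momentCurve L x) = q.eval x := hqℓ
  simp only [Prod.fst_sub, Prod.snd_sub, map_sub, hℓ]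
  simp only [eval_neg, sub_neg_eq_add] at hxy
  linarith

theorem exists_isProbabilityMeasure_integral_sub_eq_two_mul_approxErr {f : ℝ → ℝ} {a b : ℝ}
    (hf : ContinuousOn f (Icc a b)) (hab : a ≤ b) (L : ℕ) :
    ∃ ν₀ ν₁ : Measure ℝ, IsProbabilityMeasure ν₀ ∧ IsProbabilityMeasure ν₁ ∧
      ν₀ (Icc a b)ᶜ = 0 ∧ ν₁ (Icc a b)ᶜ = 0 ∧
      (∀ l ≤ L, ∫ t, t ^ l ∂ν₁ = ∫ t, t ^ l ∂ν₀) ∧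
      ∫ t, f t ∂ν₁ - ∫ t, f t ∂ν₀ = 2 * approxErr f L a b := by
  obtain ⟨t, ht, hmem⟩ := exists_two_mul_approxErr_le_mem_convexHull hf hab L
  obtain ⟨ν₀, ν₁, hν₀, hν₁, h₀, h₁, hΛ⟩ :=
    exists_isProbabilityMeasure_of_mem_convexHull_image_sub
      (g := fun x => (momentCurve L x, f x)) hmem
  have hmom : ∀ l ≤ L, ∫ t, t ^ l ∂ν₁ = ∫ t, t ^ l ∂ν₀ := fun l hl => by
    simpa [momentCurve, sub_eq_zero] using
      hΛ (LinearMap.proj (⟨l, Nat.lt_succ_of_le hl⟩ : Fin (L + 1)) ∘ₗ LinearMap.fst ℝ _ ℝ)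
  have hval : ∫ t, f t ∂ν₁ - ∫ t, f t ∂ν₀ = t := by simpa using hΛ (LinearMap.snd ℝ _ ℝ)
  exact ⟨ν₀, ν₁, hν₀, hν₁, h₀, h₁, hmom,
    (integral_sub_integral_le_two_mul_approxErr hf h₀ h₁ hmom).antisymm (hval ▸ ht)⟩

theorem exists_matching_priors_xalpha_general (α : ℝ) (hα0 : 0 < α)
    (L : ℕ) :
    ∃ ν₀ ν₁ : Measure ℝ,
      IsProbabilityMeasure ν₀ ∧ IsProbabilityMeasure ν₁ ∧
      ν₀ ((Set.Icc (0 : ℝ) 1)ᶜ) = 0 ∧ ν₁ ((Set.Icc (0 : ℝ) 1)ᶜ) = 0 ∧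
      (∀ l : ℕ, l ≤ L → (∫ t, t ^ l ∂ν₁) = ∫ t, t ^ l ∂ν₀) ∧
      (∫ t, t ^ α ∂ν₁) - (∫ t, t ^ α ∂ν₀)
        = 2 * approxErr (fun x => x ^ α) L 0 1 :=
  exists_isProbabilityMeasure_integral_sub_eq_two_mul_approxErr
    (Real.continuous_rpow_const hα0.le).continuousOn zero_le_one L

theorem exists_matching_priors_xalpha (α : ℝ) (hα0 : 0 < α) (hα1 : α < 1)
    (L : ℕ) (hL : 1 ≤ L) :
    ∃ ν₀ ν₁ : Measure ℝ,
      IsProbabilityMeasure ν₀ ∧ IsProbabilityMeasure ν₁ ∧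
      ν₀ ((Set.Icc (0 : ℝ) 1)ᶜ) = 0 ∧ ν₁ ((Set.Icc (0 : ℝ) 1)ᶜ) = 0 ∧
      (∀ l : ℕ, l ≤ L → (∫ t, t ^ l ∂ν₁) = ∫ t, t ^ l ∂ν₀) ∧
      (∫ t, t ^ α ∂ν₁) - (∫ t, t ^ α ∂ν₀)
        = 2 * approxErr (fun x => x ^ α) L 0 1 :=
  exists_matching_priors_xalpha_general α hα0 L
end

section
/- There exists an integer N₀ such that for every integer n ≥ N₀ the following holds: if μ₀ and μ₁ are any two Borel probability measures on the interval [0, (ln n)/n] satisfying ∫ p^l dμ₁(p) = ∫ p^l dμ₀(p) for every integer l with 0 ≤ l ≤ 10e·ln n, then the mixed-Poisson probability mass functions F_i(y) = ∫ e^{−np}·(np)^y / y! dμ_i(p) (for y ∈ ℕ and i = 0, 1) satisfy (1/2)·∑_{y=0}^∞ |F_1(y) − F_0(y)| ≤ n^{−6}; that is, the total variation distance between the two mixed-Poisson distributions on ℕ is at most n^{−6}. -/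
/-!
On `[0, log n / n]` the Poisson kernel `p ↦ e^{-np} (np)^y / y!` is uniformly approximated by its
Taylor polynomial of degree `L = ⌊10 e log n⌋`: the neglected terms are bounded by
`(np)^y (np)^k / (y! k!) ≤ (2 e log n / (y + k))^(y + k) ≤ 5^{-(y + k)}`, so the error is at most
`(5/4) 5^{-max(y, L+1)}`. Two measures with the same moments up to degree `L` integrate that
polynomial identically, hence `|F₁(y) - F₀(y)|` is at most twice the error, and summing over `y`
gives `O(log n · 5^{-L}) ≤ n^{-6}`.
-/

open scoped BigOperators ENNReal
open MeasureTheory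

/-- pmf at `y` of the mixed-Poisson distribution with rate scaling `n` and mixing
measure `μ`. -/
noncomputable def mixedPoissonPMF (n : ℕ) (μ : Measure ℝ) (y : ℕ) : ℝ :=
  ∫ p, Real.exp (-((n : ℝ) * p)) * ((n : ℝ) * p) ^ y / (Nat.factorial y : ℝ) ∂μ

open Real Finset Polynomial
open scoped Nat

lemma abs_exp_sub_sum_range_le {x a : ℝ} (hxa : |x| ≤ a) (M : ℕ) :
    |exp x - ∑ k ∈ range M, x ^ k / k !| ≤ ∑' k, a ^ (k + M) / (k + M)! := by
  have hx : HasSum (fun k ↦ x ^ (k + M) / (k + M)!) (exp x - ∑ k ∈ range M, x ^ k / k !) := by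
    rw [exp_eq_exp_ℝ]
    exact (hasSum_nat_add_iff' M).2 (NormedSpace.expSeries_div_hasSum_exp x)
  have ha : Summable (fun k ↦ a ^ (k + M) / (k + M)!) :=
    (summable_nat_add_iff M).2 (summable_pow_div_factorial a)
  refine hx.norm_le_of_bounded ha.hasSum fun k ↦ ?_
  rw [norm_div, norm_pow, Real.norm_eq_abs, RCLike.norm_natCast]
  gcongr

lemma pow_div_factorial_mul_pow_div_factorial_le {a : ℝ} (ha : 0 ≤ a) (i j : ℕ) :
    a ^ i / i ! * (a ^ j / j !) ≤ (2 * a) ^ (i + j) / (i + j)! := by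
  have hchoose : ((i + j).choose j : ℝ) * i ! * j ! = (i + j)! := by
    exact_mod_cast Nat.add_choose_mul_factorial_mul_factorial i j
  have htwo : ((i + j).choose j : ℝ) ≤ 2 ^ (i + j) := by exact_mod_cast Nat.choose_le_two_pow _ _
  calc a ^ i / i ! * (a ^ j / j !) = ((i + j).choose j : ℝ) * a ^ (i + j) / (i + j)! := by
        rw [eq_div_iff (by positivity), ← hchoose]
        field_simp
        ring
    _ ≤ 2 ^ (i + j) * a ^ (i + j) / (i + j)! := by gcongr
    _ = (2 * a) ^ (i + j) / (i + j)! := by rw [mul_pow]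

lemma pow_div_factorial_le_exp_one_mul_div_pow {x : ℝ} (hx : 0 ≤ x) (m : ℕ) :
    x ^ m / m ! ≤ (exp 1 * x / m) ^ m := by
  have hm : (m : ℝ) ^ m / m ! ≤ exp 1 ^ m :=
    exp_one_pow m ▸ pow_div_factorial_le_exp _ m.cast_nonneg m
  rcases m.eq_zero_or_pos with rfl | hm0
  · simp
  calc x ^ m / m ! = (x / m) ^ m * ((m : ℝ) ^ m / m !) := by
        rw [div_pow, mul_div_assoc', div_mul_cancel₀ _ (by positivity)]
    _ ≤ (x / m) ^ m * exp 1 ^ m := by gcongr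
    _ = (exp 1 * x / m) ^ m := by rw [← mul_pow]; ring

lemma pow_div_factorial_mul_pow_div_factorial_le_inv_five_pow {a : ℝ} (ha : 0 ≤ a) {i j : ℕ}
    (hij : 10 * exp 1 * a ≤ i + j) : a ^ i / i ! * (a ^ j / j !) ≤ 5⁻¹ ^ (i + j) :=
  calc a ^ i / i ! * (a ^ j / j !) ≤ (2 * a) ^ (i + j) / (i + j)! :=
        pow_div_factorial_mul_pow_div_factorial_le ha i j
    _ ≤ (exp 1 * (2 * a) / (i + j : ℕ)) ^ (i + j) :=
        pow_div_factorial_le_exp_one_mul_div_pow (by positivity) _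
    _ ≤ 5⁻¹ ^ (i + j) := by
        gcongr
        refine div_le_of_le_mul₀ (by positivity) (by norm_num) ?_
        push_cast
        linarith

lemma abs_exp_neg_mul_pow_div_factorial_sub_taylor_le {a c : ℝ} (hc : 0 ≤ c) (hca : c ≤ a) {y M : ℕ}
    (hyM : 10 * exp 1 * a ≤ (y + M : ℕ)) :
    |exp (-c) * c ^ y / (y ! : ℝ) - c ^ y / y ! * ∑ k ∈ range M, (-c) ^ k / k !|
      ≤ 5 / 4 * 5⁻¹ ^ (y + M) := by
  have ha : 0 ≤ a := hc.trans hca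
  have htail : Summable fun k ↦ a ^ (k + M) / (k + M)! :=
    (summable_nat_add_iff M).2 (summable_pow_div_factorial a)
  have hgeom : Summable fun k : ℕ ↦ (5 : ℝ)⁻¹ ^ k :=
    summable_geometric_of_lt_one (by norm_num) (by norm_num)
  calc |exp (-c) * c ^ y / (y ! : ℝ) - c ^ y / y ! * ∑ k ∈ range M, (-c) ^ k / k !|
      = |c ^ y / y ! * (exp (-c) - ∑ k ∈ range M, (-c) ^ k / k !)| := by ring_nf
    _ = c ^ y / y ! * |exp (-c) - ∑ k ∈ range M, (-c) ^ k / k !| := by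
        rw [abs_mul, abs_of_nonneg (by positivity)]
    _ ≤ a ^ y / y ! * ∑' k, a ^ (k + M) / (k + M)! := by
        gcongr
        exact abs_exp_sub_sum_range_le (by rwa [abs_neg, abs_of_nonneg hc]) M
    _ = ∑' k, a ^ y / y ! * (a ^ (k + M) / (k + M)!) := tsum_mul_left.symm
    _ ≤ ∑' k, 5⁻¹ ^ (y + M) * 5⁻¹ ^ k := by
        refine (htail.mul_left _).tsum_le_tsum (fun k ↦ ?_) (hgeom.mul_left _)
        rw [← pow_add, add_assoc, add_comm M]
        refine pow_div_factorial_mul_pow_div_factorial_le_inv_five_pow ha ?_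
        push_cast at hyM ⊢
        linarith [(k.cast_nonneg : (0 : ℝ) ≤ k)]
    _ = 5 / 4 * 5⁻¹ ^ (y + M) := by
        rw [tsum_mul_left, tsum_geometric_of_lt_one (by norm_num) (by norm_num)]
        ring

/-- The degree-`L` Taylor polynomial of `p ↦ e^{-tp} (tp)^y / y!`; it is `0` when `y > L`. -/
noncomputable def poissonKernelTaylor (t : ℝ) (L y : ℕ) : ℝ[X] :=
  ∑ k ∈ range (L + 1 - y), C (t ^ y / y ! * ((-t) ^ k / k !)) * X ^ (y + k)

lemma natDegree_poissonKernelTaylor_le (t : ℝ) (L y : ℕ) :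
    (poissonKernelTaylor t L y).natDegree ≤ L :=
  natDegree_sum_le_of_forall_le _ _ fun k hk ↦
    (natDegree_C_mul_X_pow_le _ _).trans (by rw [mem_range] at hk; omega)

lemma eval_poissonKernelTaylor (t p : ℝ) (L y : ℕ) :
    (poissonKernelTaylor t L y).eval p
      = (t * p) ^ y / y ! * ∑ k ∈ range (L + 1 - y), (-(t * p)) ^ k / k ! := by
  simp only [poissonKernelTaylor, eval_finsetSum, eval_mul, eval_C, eval_pow, eval_X, mul_sum]
  refine sum_congr rfl fun k _ ↦ ?_
  ring

lemma hasSum_pow_max {r : ℝ} (hr₀ : 0 ≤ r) (hr₁ : r < 1) (N : ℕ) :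
    HasSum (fun y ↦ r ^ max y N) (N * r ^ N + r ^ N * (1 - r)⁻¹) := by
  refine (hasSum_nat_add_iff' N).1 ?_
  have htail : ∀ y, r ^ max (y + N) N = r ^ N * r ^ y := fun y ↦ by
    rw [max_eq_left (by omega), pow_add, mul_comm]
  have hhead : ∑ y ∈ range N, r ^ max y N = N * r ^ N := by
    rw [sum_congr rfl fun y hy ↦ by rw [max_eq_right (mem_range.1 hy).le], sum_const, card_range,
      nsmul_eq_mul]
  simpa only [htail, hhead, add_sub_cancel_left] using
    (hasSum_geometric_of_lt_one hr₀ hr₁).mul_left (r ^ N)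

lemma half_mul_tsum_ofReal_abs_le {d ε : ℕ → ℝ} {s : ℝ} (hε : HasSum ε s)
    (hd : ∀ y, |d y| ≤ 2 * ε y) :
    (1 / 2 : ℝ≥0∞) * ∑' y, ENNReal.ofReal |d y| ≤ ENNReal.ofReal s := by
  have hε₀ : ∀ y, 0 ≤ 2 * ε y := fun y ↦ (abs_nonneg _).trans (hd y)
  calc (1 / 2 : ℝ≥0∞) * ∑' y, ENNReal.ofReal |d y|
      ≤ 1 / 2 * ∑' y, ENNReal.ofReal (2 * ε y) := by gcongr with y; exact hd y
    _ = 1 / 2 * ENNReal.ofReal (2 * s) := by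
        rw [← ENNReal.ofReal_tsum_of_nonneg hε₀ (hε.mul_left 2).summable, (hε.mul_left 2).tsum_eq]
    _ = ENNReal.ofReal s := by
        rw [ENNReal.ofReal_mul zero_le_two, ENNReal.ofReal_ofNat, ← mul_assoc, one_div,
          ENNReal.inv_mul_cancel two_ne_zero ENNReal.ofNat_ne_top, one_mul]

lemma Continuous.integrable_of_ae_mem_isCompact {α : Type*} [TopologicalSpace α] [T2Space α]
    [MeasurableSpace α] [OpensMeasurableSpace α] {μ : Measure α} [IsFiniteMeasure μ] {K : Set α}
    (hK : IsCompact K) (hμ : ∀ᵐ x ∂μ, x ∈ K) {f : α → ℝ} (hf : Continuous f) :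
    Integrable f μ := by
  rw [← Measure.restrict_eq_self_of_ae_mem hμ]
  exact hf.continuousOn.integrableOn_compact hK

lemma integral_eval_eq_sum_coeff_mul_moment {μ : Measure ℝ}
    (hμ : ∀ l, Integrable (fun x ↦ x ^ l) μ) (P : ℝ[X]) :
    ∫ x, P.eval x ∂μ = ∑ i ∈ range (P.natDegree + 1), P.coeff i * ∫ x, x ^ i ∂μ := by
  simp only [eval_eq_sum_range]
  rw [integral_finsetSum _ fun i _ ↦ (hμ i).const_mul _]
  simp only [integral_const_mul]

lemma abs_integral_sub_integral_le_of_moments_eq {μ₀ μ₁ : Measure ℝ} [IsProbabilityMeasure μ₀]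
    [IsProbabilityMeasure μ₁] {K : Set ℝ} (hK : IsCompact K) (h₀ : ∀ᵐ x ∂μ₀, x ∈ K)
    (h₁ : ∀ᵐ x ∂μ₁, x ∈ K) {L : ℕ} (hmom : ∀ l ≤ L, ∫ x, x ^ l ∂μ₁ = ∫ x, x ^ l ∂μ₀)
    {f : ℝ → ℝ} (hf : Continuous f) {P : ℝ[X]} (hP : P.natDegree ≤ L) {ε : ℝ}
    (hfP : ∀ x ∈ K, |f x - P.eval x| ≤ ε) :
    |∫ x, f x ∂μ₁ - ∫ x, f x ∂μ₀| ≤ 2 * ε := by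
  have happrox : ∀ (μ : Measure ℝ) [IsProbabilityMeasure μ], (∀ᵐ x ∂μ, x ∈ K) →
      |∫ x, f x ∂μ - ∫ x, P.eval x ∂μ| ≤ ε := fun μ _ hμ ↦ by
    rw [← integral_sub (hf.integrable_of_ae_mem_isCompact hK hμ)
      (P.continuous.integrable_of_ae_mem_isCompact hK hμ)]
    simpa using norm_integral_le_of_norm_le_const
      (hμ.mono fun x hx ↦ (Real.norm_eq_abs _).trans_le (hfP x hx))
  have hmoments : ∀ (μ : Measure ℝ) [IsProbabilityMeasure μ], (∀ᵐ x ∂μ, x ∈ K) →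
      ∀ l, Integrable (fun x ↦ x ^ l) μ := fun μ _ hμ l ↦
    (continuous_pow l).integrable_of_ae_mem_isCompact hK hμ
  have hPint : ∫ x, P.eval x ∂μ₁ = ∫ x, P.eval x ∂μ₀ := by
    rw [integral_eval_eq_sum_coeff_mul_moment (hmoments μ₀ h₀),
      integral_eval_eq_sum_coeff_mul_moment (hmoments μ₁ h₁)]
    exact sum_congr rfl fun i hi ↦ by rw [hmom i (by rw [mem_range] at hi; omega)]
  calc |∫ x, f x ∂μ₁ - ∫ x, f x ∂μ₀|
      = |(∫ x, f x ∂μ₁ - ∫ x, P.eval x ∂μ₁) - (∫ x, f x ∂μ₀ - ∫ x, P.eval x ∂μ₀)| := by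
        rw [hPint]; ring_nf
    _ ≤ ε + ε := (abs_sub _ _).trans (add_le_add (happrox μ₁ h₁) (happrox μ₀ h₀))
    _ = 2 * ε := by ring

lemma sum_inv_five_pow_max_le_inv_pow_six {x : ℝ} (hx : 2 ≤ x) {N : ℕ}
    (hlow : 10 * exp 1 * log x ≤ N) (hup : (N : ℝ) ≤ 10 * exp 1 * log x + 1) :
    5 / 4 * (N * 5⁻¹ ^ N + 5⁻¹ ^ N * (1 - 5⁻¹)⁻¹) ≤ (x ^ 6)⁻¹ := by
  have hx₀ : 0 < x := by linarith
  have hlog₀ : 0 ≤ log x := log_nonneg (by linarith)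
  have hlog : log x ≤ x - 1 := log_le_sub_one_of_pos hx₀
  have he₁ := exp_one_gt_d9
  have he₂ := exp_one_lt_d9
  have hdecay : (5 : ℝ)⁻¹ ^ N ≤ (x ^ 27)⁻¹ :=
    calc (5 : ℝ)⁻¹ ^ N = (5 ^ N)⁻¹ := inv_pow _ _
      _ ≤ (exp 1 ^ N)⁻¹ := by gcongr; linarith
      _ = (exp N)⁻¹ := by rw [exp_one_pow]
      _ ≤ (exp (27 * log x))⁻¹ := by gcongr; nlinarith
      _ = (x ^ 27)⁻¹ := by rw [← exp_log hx₀, ← exp_nat_mul, log_exp]; norm_num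
  have hcoef : 5 / 4 * (N + 5 / 4) ≤ x ^ 21 := by
    have : (2 : ℝ) ^ 20 ≤ x ^ 20 := by gcongr
    nlinarith
  calc 5 / 4 * (N * 5⁻¹ ^ N + 5⁻¹ ^ N * (1 - 5⁻¹)⁻¹)
      = 5 / 4 * (N + 5 / 4) * (5 : ℝ)⁻¹ ^ N := by
        norm_num; ring
    _ ≤ x ^ 21 * (x ^ 27)⁻¹ := by gcongr
    _ = (x ^ 6)⁻¹ := by field_simp

theorem mixedPoisson_TV_bound :
    ∃ N₀ : ℕ, ∀ n : ℕ, N₀ ≤ n →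
      ∀ μ₀ μ₁ : Measure ℝ,
        IsProbabilityMeasure μ₀ → IsProbabilityMeasure μ₁ →
        μ₀ ((Set.Icc (0 : ℝ) (Real.log n / n))ᶜ) = 0 →
        μ₁ ((Set.Icc (0 : ℝ) (Real.log n / n))ᶜ) = 0 →
        (∀ l : ℕ, (l : ℝ) ≤ 10 * Real.exp 1 * Real.log n →
          (∫ p, p ^ l ∂μ₁) = ∫ p, p ^ l ∂μ₀) →
        (1 / 2 : ℝ≥0∞) *
            ∑' y : ℕ, ENNReal.ofReal |mixedPoissonPMF n μ₁ y - mixedPoissonPMF n μ₀ y|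
          ≤ ENNReal.ofReal (((n : ℝ) ^ 6)⁻¹) := by
  refine ⟨2, fun n hn μ₀ μ₁ hμ₀ hμ₁ h₀ h₁ hmom ↦ ?_⟩
  have hn₂ : (2 : ℝ) ≤ n := by exact_mod_cast hn
  have hlog : 0 ≤ log n := log_nonneg (by linarith)
  set L := ⌊10 * exp 1 * log n⌋₊
  have hL_le : (L : ℝ) ≤ 10 * exp 1 * log n := Nat.floor_le (by positivity)
  have hL : 10 * exp 1 * log n ≤ L + 1 := (Nat.lt_floor_add_one _).le
  have hΔ : ∀ y, |mixedPoissonPMF n μ₁ y - mixedPoissonPMF n μ₀ y|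
      ≤ 2 * (5 / 4 * 5⁻¹ ^ max y (L + 1)) := fun y ↦ by
    refine abs_integral_sub_integral_le_of_moments_eq isCompact_Icc (ae_iff.2 h₀) (ae_iff.2 h₁)
      (fun l hl ↦ hmom l ((Nat.cast_le.2 hl).trans hL_le))
      (by fun_prop) (natDegree_poissonKernelTaylor_le n L y) fun p hp ↦ ?_
    rw [eval_poissonKernelTaylor, show max y (L + 1) = y + (L + 1 - y) by omega]
    refine abs_exp_neg_mul_pow_div_factorial_sub_taylor_le (mul_nonneg n.cast_nonneg hp.1)
      ((le_div_iff₀' (by linarith)).1 hp.2) ?_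
    rw [show y + (L + 1 - y) = max y (L + 1) by omega]
    exact hL.trans (by exact_mod_cast le_max_right y (L + 1))
  refine (half_mul_tsum_ofReal_abs_le
    ((hasSum_pow_max (by norm_num) (by norm_num) (L + 1)).mul_left (5 / 4)) hΔ).trans
    (ENNReal.ofReal_le_ofReal ?_)
  exact sum_inv_five_pow_max_le_inv_pow_six hn₂ (by exact_mod_cast hL) (by push_cast; linarith)
end

section
/- Let λ > 0, let k ≥ 1 be an integer, and let X ~ Poisson(λ). Then, with M = max{λ, k}, the k-th moment of X satisfies E[X^k] ≤ (2M)^k. -/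
/-!
Comparing `j` with `(j - k) + k` and expanding binomially gives
`j ^ k ≤ ∑ i ≤ k, C(k, i) k ^ (k - i) (j)_i`, where `(j)_i ≥ (j - k) ^ i` is the falling
factorial. The Poisson factorial moments are `E[(X)_i] = λ ^ i`, so
`E[X ^ k] ≤ ∑ i ≤ k, C(k, i) k ^ (k - i) λ ^ i = (λ + k) ^ k ≤ (2 max λ k) ^ k`.
-/

open Finset
open scoped Nat

lemma Nat.sub_pow_le_descFactorial {i k : ℕ} (hi : i ≤ k + 1) (j : ℕ) :
    (j - k) ^ i ≤ j.descFactorial i :=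
  (Nat.pow_le_pow_left (by omega) i).trans (Nat.pow_sub_le_descFactorial j i)

lemma Nat.pow_le_sum_descFactorial_mul (j k : ℕ) :
    j ^ k ≤ ∑ i ∈ range (k + 1), j.descFactorial i * k ^ (k - i) * k.choose i := by
  calc j ^ k ≤ (j - k + k) ^ k := Nat.pow_le_pow_left le_tsub_add k
    _ = ∑ i ∈ range (k + 1), (j - k) ^ i * k ^ (k - i) * k.choose i := add_pow _ _ _
    _ ≤ _ := sum_le_sum fun i hi => by
      gcongr
      exact Nat.sub_pow_le_descFactorial (mem_range.1 hi).le j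

lemma hasSum_descFactorial_mul_poisson (lam : ℝ) (i : ℕ) :
    HasSum (fun j : ℕ => (j.descFactorial i : ℝ) * (Real.exp (-lam) * lam ^ j / j !))
      (lam ^ i) := by
  refine (hasSum_nat_add_iff' i).1 ?_
  have hhead :
      ∑ j ∈ range i, (j.descFactorial i : ℝ) * (Real.exp (-lam) * lam ^ j / j !) = 0 :=
    sum_eq_zero fun j hj => by
      simp [Nat.descFactorial_eq_zero_iff_lt.2 (mem_range.1 hj)]
  have hshift (j : ℕ) :
      ((j + i).descFactorial i : ℝ) * (Real.exp (-lam) * lam ^ (j + i) / (j + i)!) =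
        lam ^ i * Real.exp (-lam) * (lam ^ j / j !) := by
    have hfac := Nat.factorial_mul_descFactorial (Nat.le_add_left i j)
    rw [Nat.add_sub_cancel] at hfac
    rw [← hfac]
    push_cast
    field_simp
    ring
  have hexp := (NormedSpace.expSeries_div_hasSum_exp lam).mul_left (lam ^ i * Real.exp (-lam))
  rw [← Real.exp_eq_exp_ℝ, mul_assoc, ← Real.exp_add, neg_add_cancel, Real.exp_zero,
    mul_one] at hexp
  simpa only [hhead, sub_zero, hshift] using hexp

lemma tsum_ofReal_pow_mul_poisson_le {lam : ℝ} (hlam : 0 ≤ lam) (k : ℕ) :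
    ∑' j : ℕ, ENNReal.ofReal ((j : ℝ) ^ k * (Real.exp (-lam) * lam ^ j / j !))
      ≤ ENNReal.ofReal ((lam + k) ^ k) := by
  set p : ℕ → ℝ := fun j => Real.exp (-lam) * lam ^ j / (j ! : ℝ)
  set q : ℕ → ℝ := fun j =>
    ∑ i ∈ range (k + 1), (j.descFactorial i : ℝ) * p j * ((k : ℝ) ^ (k - i) * k.choose i)
  have hq : HasSum q ((lam + k) ^ k) := by
    simp only [add_pow, mul_assoc]
    exact hasSum_sum fun i _ => (hasSum_descFactorial_mul_poisson lam i).mul_right _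
  have hle (j : ℕ) : (j : ℝ) ^ k * p j ≤ q j :=
    calc (j : ℝ) ^ k * p j
        ≤ (∑ i ∈ range (k + 1), (j.descFactorial i : ℝ) * k ^ (k - i) * k.choose i) * p j :=
          by gcongr; exact_mod_cast Nat.pow_le_sum_descFactorial_mul j k
      _ = q j := by
          rw [sum_mul]
          exact sum_congr rfl fun i _ => by ring
  calc ∑' j : ℕ, ENNReal.ofReal ((j : ℝ) ^ k * p j)
      ≤ ∑' j, ENNReal.ofReal (q j) :=
        ENNReal.tsum_le_tsum fun j => ENNReal.ofReal_le_ofReal (hle j)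
    _ = ENNReal.ofReal ((lam + k) ^ k) := by
        rw [← ENNReal.ofReal_tsum_of_nonneg (fun j => by positivity) hq.summable, hq.tsum_eq]

theorem poisson_moment_bound_general (lam : ℝ) (hlam : 0 < lam) (k : ℕ) :
    ∑' j : ℕ, ENNReal.ofReal
        ((j : ℝ) ^ k * (Real.exp (-lam) * lam ^ j / (Nat.factorial j : ℝ)))
      ≤ ENNReal.ofReal ((2 * max lam (k : ℝ)) ^ k) := by
  refine (tsum_ofReal_pow_mul_poisson_le hlam.le k).trans (ENNReal.ofReal_le_ofReal ?_)
  gcongr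
  linarith [le_max_left lam k, le_max_right lam k]

theorem poisson_moment_bound (lam : ℝ) (hlam : 0 < lam) (k : ℕ) (hk : 1 ≤ k) :
    ∑' j : ℕ, ENNReal.ofReal
        ((j : ℝ) ^ k * (Real.exp (-lam) * lam ^ j / (Nat.factorial j : ℝ)))
      ≤ ENNReal.ofReal ((2 * max lam (k : ℝ)) ^ k) :=
  poisson_moment_bound_general lam hlam k
end

section
/- Fix an integer n ≥ 2 and a real c₁ > 0 with 1 ≤ c₁·ln n ≤ n, and set Δ = c₁·ln n / n and t = Δ/4. Let α ∈ (0, 3/2), and let N ~ Poisson(n·p) where p ∈ [Δ, 1]. Then the bias of U_α evaluated at the empirical frequency N/n satisfies | E[U_α(N/n)] − p^α | ≤ 17/( n^α·(c₁·ln n)^{2−α} ) + (8310·(1+α)/(α·(2−α)))·p^α·n^{−c₁/8}. -/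
/-!
Write `λ = n p` and `x = N / n`. On `{N ≥ λ / 2}` the interpolation is `1`, so
`U_α(x) = x ^ α + α (1 - α) / (2 n) · x ^ (α - 1)`; expand `x ^ α` to third and `x ^ (α - 1)` to
first order around `p`, with Lagrange remainders taken over `[p / 2, ∞)`. The expectation of the
Taylor polynomial is `p ^ α + O(p ^ α / λ ^ 2)`, because the correction term
`α (1 - α) / (2 n) · p ^ (α - 1)` cancels the variance term `α (α - 1) / 2 · p ^ (α - 2) · p / n`;
the remainders cost `O(p ^ α / λ ^ 2)` through the central moments `E (N - λ) ^ 2 = λ` and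
`E (N - λ) ^ 4 = 3 λ ^ 2 + λ`, obtained from Stein's identity. On `{N < λ / 2}` everything is
`O(p ^ α)`, and `1{N < λ / 2} ≤ 2 ^ (λ / 2 - N)` has expectation `(2 / e) ^ (λ / 2) ≤ e ^ (-λ / 8)`,
which is at most `n ^ (-c₁ / 8)`.
-/

open scoped BigOperators

/-- The interpolation polynomial `g(y; a)` of Lemma 1. -/
noncomputable def gfun (a y : ℝ) : ℝ :=
  126 * (y / a) ^ 5 - 420 * (y / a) ^ 6 + 540 * (y / a) ^ 7
    - 315 * (y / a) ^ 8 + 70 * (y / a) ^ 9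

/-- The interpolation function `I_n` with threshold `t`. -/
noncomputable def interp (t x : ℝ) : ℝ :=
  if x ≤ t then 0 else if x < 2 * t then gfun t (x - t) else 1

/-- The "smooth regime" estimator `U_α`. -/
noncomputable def Ualpha (n : ℕ) (t α x : ℝ) : ℝ :=
  if x = 0 then 0
  else interp t x * (x ^ α + (α * (1 - α) / (2 * (n : ℝ))) * x ^ (α - 1))

open Finset Real

noncomputable def poissonWeight (x : ℝ) (j : ℕ) : ℝ := exp (-x) * x ^ j / j.factorial

lemma poissonWeight_nonneg {x : ℝ} (hx : 0 ≤ x) (j : ℕ) : 0 ≤ poissonWeight x j := by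
  unfold poissonWeight; positivity

lemma poissonWeight_succ_mul (x : ℝ) (j : ℕ) :
    poissonWeight x (j + 1) * (j + 1 : ℕ) = x * poissonWeight x j := by
  simp only [poissonWeight, Nat.factorial_succ, Nat.cast_mul, pow_succ]
  field_simp

lemma hasSum_poissonWeight_mul_pow (x r : ℝ) :
    HasSum (fun j => poissonWeight x j * r ^ j) (exp (x * (r - 1))) := by
  have h := (NormedSpace.expSeries_div_hasSum_exp (x * r)).mul_left (exp (-x))
  rw [← Real.exp_eq_exp_ℝ, ← Real.exp_add, neg_add_eq_sub, ← mul_sub_one] at h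
  exact h.congr_fun fun j => by simp only [poissonWeight, mul_pow]; ring

/-- Stein's identity `E[(N - x) h(N)] = x E[h(N + 1) - h(N)]` for `N ~ Poisson(x)`. -/
lemma HasSum.poissonWeight_mul_sub_mul {x a b : ℝ} {h : ℕ → ℝ}
    (ha : HasSum (fun j => poissonWeight x j * h (j + 1)) a)
    (hb : HasSum (fun j => poissonWeight x j * h j) b) :
    HasSum (fun j => poissonWeight x j * (((j : ℝ) - x) * h j)) (x * (a - b)) := by
  have hmul : HasSum (fun j => poissonWeight x j * (j * h j)) (x * a) := by
    rw [← hasSum_nat_add_iff' 1, sum_range_one, Nat.cast_zero, zero_mul, mul_zero, sub_zero]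
    refine (ha.mul_left x).congr_fun fun j => ?_
    rw [← mul_assoc, poissonWeight_succ_mul, mul_assoc]
  rw [mul_sub]
  exact (hmul.sub (hb.mul_left x)).congr_fun fun j => by ring

noncomputable def poissonCentralMoment (x : ℝ) : ℕ → ℝ
  | 0 => 1
  | m + 1 => x * ∑ i : Fin m, (m.choose i : ℝ) * poissonCentralMoment x i

lemma hasSum_poissonWeight_mul_sub_pow (x : ℝ) (m : ℕ) :
    HasSum (fun j => poissonWeight x j * ((j : ℝ) - x) ^ m) (poissonCentralMoment x m) := by
  induction m using Nat.strong_induction_on with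
  | _ m ih =>
  match m with
  | 0 => simpa [poissonCentralMoment] using hasSum_poissonWeight_mul_pow x 1
  | m + 1 =>
    have hshift : HasSum (fun j => poissonWeight x j * (((j + 1 : ℕ) : ℝ) - x) ^ m)
        (∑ i ∈ range (m + 1), (m.choose i : ℝ) * poissonCentralMoment x i) := by
      refine (hasSum_sum fun i hi =>
        (ih i (mem_range.1 hi)).mul_left (m.choose i : ℝ)).congr_fun fun j => ?_
      rw [Nat.cast_succ, add_sub_right_comm, add_pow, mul_sum]
      exact sum_congr rfl fun i _ => by ring
    have h := HasSum.poissonWeight_mul_sub_mul (h := fun j => ((j : ℝ) - x) ^ m) hshift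
      (ih m m.lt_succ_self)
    rw [sum_range_succ, Nat.choose_self, Nat.cast_one, one_mul, add_sub_cancel_right] at h
    rw [poissonCentralMoment,
      Fin.sum_univ_eq_sum_range (fun i => (m.choose i : ℝ) * poissonCentralMoment x i)]
    exact h.congr_fun fun j => by ring

@[simp] lemma poissonCentralMoment_zero (x : ℝ) : poissonCentralMoment x 0 = 1 := by
  rw [poissonCentralMoment]

@[simp] lemma poissonCentralMoment_one (x : ℝ) : poissonCentralMoment x 1 = 0 := by
  simp [poissonCentralMoment]

lemma poissonCentralMoment_two (x : ℝ) : poissonCentralMoment x 2 = x := by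
  simp [poissonCentralMoment]

lemma poissonCentralMoment_three (x : ℝ) : poissonCentralMoment x 3 = x := by
  simp [poissonCentralMoment, Fin.sum_univ_succ]

lemma poissonCentralMoment_four (x : ℝ) : poissonCentralMoment x 4 = 3 * x ^ 2 + x := by
  simp [poissonCentralMoment, Fin.sum_univ_succ]; ring

lemma hasSum_poissonWeight_mul_div_sub_pow {n : ℕ} (hn : n ≠ 0) (p : ℝ) (m : ℕ) :
    HasSum (fun j => poissonWeight (n * p) j * ((j : ℝ) / n - p) ^ m)
      (poissonCentralMoment (n * p) m / n ^ m) := by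
  refine ((hasSum_poissonWeight_mul_sub_pow (n * p) m).div_const ((n : ℝ) ^ m)).congr_fun
    fun j => ?_
  rw [mul_div_assoc, ← div_pow, sub_div, mul_div_cancel_left₀ _ (Nat.cast_ne_zero.2 hn)]

lemma abs_tsum_sub_le_of_abs_sub_le {ι : Type*} {f g u : ι → ℝ} {a b : ℝ} (hg : HasSum g a)
    (hu : HasSum u b) (h : ∀ i, |f i - g i| ≤ u i) : |∑' i, f i - a| ≤ b := by
  have hfg : Summable fun i => f i - g i := .of_norm_bounded hu.summable h
  have hf : HasSum f (∑' i, (f i - g i) + a) :=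
    (hfg.hasSum.add hg).congr_fun fun i => by ring
  rw [hf.tsum_eq, add_sub_cancel_right]
  exact tsum_of_norm_bounded (f := fun i => f i - g i) hu h

lemma abs_le_of_abs_deriv_le_mul_pow_of_le {f f' : ℝ → ℝ} {p x C : ℝ} {k : ℕ} (hpx : p ≤ x)
    (hf : ∀ y ∈ Set.Icc p x, HasDerivAt f (f' y) y)
    (hbound : ∀ y ∈ Set.Icc p x, |f' y| ≤ C * |y - p| ^ k) (hp : f p = 0) :
    |f x| ≤ C / (k + 1) * |x - p| ^ (k + 1) := by
  have hB : ∀ y, HasDerivAt (fun y => C / (k + 1) * (y - p) ^ (k + 1)) (C * (y - p) ^ k) y := by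
    intro y
    refine ((((hasDerivAt_id y).sub_const p).fun_pow (k + 1)).const_mul
      (C / (k + 1))).congr_deriv ?_
    rw [id, Nat.add_sub_cancel]
    push_cast
    field_simp
  rw [abs_of_nonneg (sub_nonneg.2 hpx)]
  refine image_norm_le_of_norm_deriv_right_le_deriv_boundary
    (fun y hy => (hf y hy).continuousAt.continuousWithinAt)
    (fun y hy => (hf y (Set.Ico_subset_Icc_self hy)).hasDerivWithinAt) (by simp [hp]) hB
    (fun y hy => ?_) (Set.right_mem_Icc.2 hpx)
  have := hbound y (Set.Ico_subset_Icc_self hy)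
  rwa [abs_of_nonneg (sub_nonneg.2 hy.1)] at this

lemma abs_le_of_abs_deriv_le_mul_pow {f f' : ℝ → ℝ} {p x C : ℝ} {k : ℕ}
    (hf : ∀ y ∈ Set.uIcc p x, HasDerivAt f (f' y) y)
    (hbound : ∀ y ∈ Set.uIcc p x, |f' y| ≤ C * |y - p| ^ k) (hp : f p = 0) :
    |f x| ≤ C / (k + 1) * |x - p| ^ (k + 1) := by
  rcases le_total p x with hpx | hxp
  · rw [Set.uIcc_of_le hpx] at hf hbound
    exact abs_le_of_abs_deriv_le_mul_pow_of_le hpx hf hbound hp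
  rw [Set.uIcc_of_ge hxp] at hf hbound
  have hneg : ∀ y ∈ Set.Icc (-p) (-x), -y ∈ Set.Icc x p :=
    fun y hy => ⟨by linarith [hy.2], by linarith [hy.1]⟩
  have h := abs_le_of_abs_deriv_le_mul_pow_of_le (f := fun y => f (-y)) (f' := fun y => -f' (-y))
    (C := C) (k := k) (neg_le_neg hxp)
    (fun y hy => by
      simpa [Function.comp_def] using (hf (-y) (hneg y hy)).comp y (hasDerivAt_neg y))
    (fun y hy => by
      rw [abs_neg, show y - -p = -(-y - p) by ring, abs_neg]
      exact hbound (-y) (hneg y hy))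
    (by simpa using hp)
  rwa [neg_neg, show -x - -p = -(x - p) by ring, abs_neg] at h

noncomputable def rpowTaylorCoeff (β : ℝ) (i : ℕ) : ℝ := (∏ l ∈ range i, (β - l)) / i.factorial

noncomputable def rpowTaylorPoly (β p : ℝ) (k : ℕ) (x : ℝ) : ℝ :=
  ∑ i ∈ range k, rpowTaylorCoeff β i * p ^ (β - i) * (x - p) ^ i

@[simp] lemma rpowTaylorCoeff_zero (β : ℝ) : rpowTaylorCoeff β 0 = 1 := by
  simp [rpowTaylorCoeff]

lemma rpowTaylorCoeff_one (β : ℝ) : rpowTaylorCoeff β 1 = β := by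
  simp [rpowTaylorCoeff]

lemma rpowTaylorCoeff_two (β : ℝ) : rpowTaylorCoeff β 2 = β * (β - 1) / 2 := by
  simp [rpowTaylorCoeff, prod_range_succ]

lemma rpowTaylorCoeff_three (β : ℝ) : rpowTaylorCoeff β 3 = β * (β - 1) * (β - 2) / 6 := by
  simp [rpowTaylorCoeff, prod_range_succ, Nat.factorial]

lemma rpowTaylorCoeff_four (β : ℝ) :
    rpowTaylorCoeff β 4 = β * (β - 1) * (β - 2) * (β - 3) / 24 := by
  simp [rpowTaylorCoeff, prod_range_succ, Nat.factorial]

lemma rpowTaylorCoeff_succ (β : ℝ) (k : ℕ) :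
    rpowTaylorCoeff β (k + 1) = β * rpowTaylorCoeff (β - 1) k / (k + 1) := by
  simp only [rpowTaylorCoeff, prod_range_succ', Nat.factorial_succ, Nat.cast_mul]
  push_cast
  rw [prod_congr rfl fun (l : ℕ) _ => show β - ((l : ℝ) + 1) = β - 1 - l by ring]
  field_simp
  ring

lemma rpowTaylorPoly_succ_self (β p : ℝ) (k : ℕ) : rpowTaylorPoly β p (k + 1) p = p ^ β := by
  simp [rpowTaylorPoly, sum_range_succ']

lemma hasDerivAt_rpowTaylorPoly_succ (β p y : ℝ) (k : ℕ) :
    HasDerivAt (rpowTaylorPoly β p (k + 1)) (β * rpowTaylorPoly (β - 1) p k y) y := by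
  have h := HasDerivAt.fun_sum (u := range k) (x := y)
    (A := fun i y => rpowTaylorCoeff β (i + 1) * p ^ (β - (i + 1 : ℕ)) * (y - p) ^ (i + 1))
    fun i _ => (((hasDerivAt_id y).sub_const p).fun_pow (i + 1)).const_mul _
  have e : rpowTaylorPoly β p (k + 1) = fun y =>
      ∑ i ∈ range k, rpowTaylorCoeff β (i + 1) * p ^ (β - (i + 1 : ℕ)) * (y - p) ^ (i + 1)
        + p ^ β := by
    ext y; simp [rpowTaylorPoly, sum_range_succ']
  rw [e]
  refine (h.add_const _).congr_deriv ?_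
  simp only [rpowTaylorPoly, mul_sum, id, Nat.add_sub_cancel, mul_one]
  refine sum_congr rfl fun i _ => ?_
  rw [rpowTaylorCoeff_succ]
  push_cast
  rw [show β - (i + 1) = β - 1 - i by ring]
  field_simp

theorem abs_rpow_sub_rpowTaylorPoly_le {m p x : ℝ} (k : ℕ) {β : ℝ} (hm : 0 < m) (hβ : β ≤ k)
    (hp : m ≤ p) (hx : m ≤ x) :
    |x ^ β - rpowTaylorPoly β p k x| ≤ |rpowTaylorCoeff β k| * m ^ (β - k) * |x - p| ^ k := by
  induction k generalizing β x with
  | zero =>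
    simp only [rpowTaylorPoly, range_zero, sum_empty, sub_zero, rpowTaylorCoeff_zero, abs_one,
      CharP.cast_eq_zero, pow_zero, one_mul, mul_one]
    rw [abs_of_nonneg (rpow_nonneg (hm.le.trans hx) _)]
    exact rpow_le_rpow_of_nonpos hm hx (by simpa using hβ)
  | succ k ih =>
    have hmy : ∀ y ∈ Set.uIcc p x, m ≤ y := fun y hy => (le_min hp hx).trans hy.1
    have h := abs_le_of_abs_deriv_le_mul_pow (p := p) (x := x) (k := k)
      (C := |β| * (|rpowTaylorCoeff (β - 1) k| * m ^ (β - 1 - k)))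
      (f := fun y => y ^ β - rpowTaylorPoly β p (k + 1) y)
      (fun y hy => ((hasDerivAt_rpow_const (Or.inl (hm.trans_le (hmy y hy)).ne')).sub
        (hasDerivAt_rpowTaylorPoly_succ β p y k)))
      (fun y hy => by
        rw [← mul_sub, abs_mul, mul_assoc]
        gcongr
        exact ih (by push_cast at hβ; linarith) (hmy y hy))
      (by simp [rpowTaylorPoly_succ_self])
    refine h.trans_eq ?_
    rw [rpowTaylorCoeff_succ, abs_div, abs_mul, abs_of_pos (by positivity : (0 : ℝ) < k + 1)]
    push_cast
    rw [show β - 1 - k = β - (k + 1) by ring]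
    ring

lemma abs_rpowTaylorPoly_le {β p x : ℝ} (k : ℕ) (hp : 0 < p) (hx : |x - p| ≤ p) :
    |rpowTaylorPoly β p k x| ≤ (∑ i ∈ range k, |rpowTaylorCoeff β i|) * p ^ β := by
  rw [rpowTaylorPoly, sum_mul]
  refine (abs_sum_le_sum_abs _ _).trans (sum_le_sum fun i _ => ?_)
  rw [abs_mul, abs_mul, abs_of_pos (rpow_pos_of_pos hp _), abs_pow, rpow_sub_natCast hp.ne',
    mul_assoc]
  gcongr
  rw [div_mul_eq_mul_div, div_le_iff₀ (by positivity)]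
  gcongr

lemma div_two_rpow_le {p γ : ℝ} (k : ℕ) (hp : 0 ≤ p) (hγ : -k ≤ γ) :
    (p / 2) ^ γ ≤ 2 ^ k * p ^ γ := by
  rw [div_rpow hp zero_le_two, div_le_iff₀ (by positivity), mul_comm, ← mul_assoc]
  refine le_mul_of_one_le_left (rpow_nonneg hp _) ?_
  rw [← rpow_natCast, ← rpow_add two_pos]
  exact one_le_rpow one_le_two (by linarith)

lemma hasSum_poissonWeight_mul_rpowTaylorPoly {n : ℕ} (hn : n ≠ 0) (β p : ℝ) (k : ℕ) :
    HasSum (fun j => poissonWeight (n * p) j * rpowTaylorPoly β p k (j / n))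
      (∑ i ∈ range k,
        rpowTaylorCoeff β i * p ^ (β - i) * (poissonCentralMoment (n * p) i / n ^ i)) :=
  (hasSum_sum fun i _ => (hasSum_poissonWeight_mul_div_sub_pow hn p i).mul_left
    (rpowTaylorCoeff β i * p ^ (β - i))).congr_fun fun j => by
      rw [rpowTaylorPoly, mul_sum]; exact sum_congr rfl fun i _ => by ring

lemma abs_mul_one_sub_le_one {α : ℝ} (hα0 : 0 < α) (hα : α < 3 / 2) : |α * (1 - α)| ≤ 1 :=
  abs_le.2 ⟨by nlinarith, by nlinarith⟩

lemma abs_rpowTaylorCoeff_three_le {α : ℝ} (hα0 : 0 < α) (hα : α < 3 / 2) :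
    |rpowTaylorCoeff α 3| ≤ 1 / 4 := by
  rw [rpowTaylorCoeff_three, abs_le]
  constructor <;> nlinarith [mul_pos hα0 (sub_pos.2 hα)]

lemma abs_rpowTaylorCoeff_four_le {α : ℝ} (hα0 : 0 < α) (hα : α < 3 / 2) :
    |rpowTaylorCoeff α 4| ≤ 1 / 24 := by
  rw [rpowTaylorCoeff_four, abs_le]
  constructor
  · nlinarith [sq_nonneg (α ^ 2 - 3 * α + 1)]
  · nlinarith [sq_nonneg (α ^ 2 - 3 * α + 1), sq_nonneg (α - 3 / 2), mul_pos hα0 (sub_pos.2 hα)]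

lemma abs_rpowTaylorCoeff_sub_one_two_le {α : ℝ} (hα0 : 0 < α) (hα : α < 3 / 2) :
    |rpowTaylorCoeff (α - 1) 2| ≤ 1 := by
  rw [rpowTaylorCoeff_two, abs_le]
  constructor <;> nlinarith

lemma sum_abs_rpowTaylorCoeff_four_le {α : ℝ} (hα0 : 0 < α) (hα : α < 3 / 2) :
    ∑ i ∈ range 4, |rpowTaylorCoeff α i| ≤ 4 := by
  simp only [sum_range_succ, range_zero, sum_empty, rpowTaylorCoeff_zero, rpowTaylorCoeff_one,
    rpowTaylorCoeff_two, abs_one]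
  have h1 : |α| ≤ 3 / 2 := abs_le.2 ⟨by linarith, by linarith⟩
  have h2 : |α * (α - 1) / 2| ≤ 1 / 2 := abs_le.2 ⟨by nlinarith, by nlinarith⟩
  linarith [abs_rpowTaylorCoeff_three_le hα0 hα]

lemma sum_abs_rpowTaylorCoeff_sub_one_two_le {α : ℝ} (hα0 : 0 < α) (hα : α < 3 / 2) :
    ∑ i ∈ range 2, |rpowTaylorCoeff (α - 1) i| ≤ 2 := by
  simp only [sum_range_succ, range_zero, sum_empty, rpowTaylorCoeff_zero, rpowTaylorCoeff_one,
    abs_one]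
  linarith [abs_le.2 (⟨by linarith, by linarith⟩ : -1 ≤ α - 1 ∧ α - 1 ≤ 1)]

lemma gfun_nonneg {t y : ℝ} (h0 : 0 ≤ y / t) (h1 : y / t ≤ 1) : 0 ≤ gfun t y := by
  have hs : 0 ≤ 1 - y / t := by linarith
  have e : gfun t y = 126 * (y / t) ^ 5 * (1 - y / t) ^ 4 + 84 * (y / t) ^ 6 * (1 - y / t) ^ 3
      + 36 * (y / t) ^ 7 * (1 - y / t) ^ 2 + 9 * (y / t) ^ 8 * (1 - y / t) + (y / t) ^ 9 := by
    unfold gfun; ring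
  rw [e]; positivity

lemma gfun_le_one {t y : ℝ} (h0 : 0 ≤ y / t) (h1 : y / t ≤ 1) : gfun t y ≤ 1 := by
  have hs : 0 ≤ 1 - y / t := by linarith
  have e : 1 - gfun t y = 126 * (y / t) ^ 4 * (1 - y / t) ^ 5 + 84 * (y / t) ^ 3 * (1 - y / t) ^ 6
      + 36 * (y / t) ^ 2 * (1 - y / t) ^ 7 + 9 * (y / t) * (1 - y / t) ^ 8 + (1 - y / t) ^ 9 := by
    unfold gfun; ring
  have : 0 ≤ 1 - gfun t y := by rw [e]; positivity
  linarith

lemma interp_mem_Icc (t x : ℝ) : interp t x ∈ Set.Icc 0 1 := by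
  unfold interp
  split_ifs with h1 h2
  · simp
  · have ht : 0 < t := by linarith
    have h0 : 0 ≤ (x - t) / t := div_nonneg (by linarith) ht.le
    have h1 : (x - t) / t ≤ 1 := (div_le_one ht).2 (by linarith)
    exact ⟨gfun_nonneg h0 h1, gfun_le_one h0 h1⟩
  · simp

lemma interp_eq_one {t x : ℝ} (ht : 0 < t) (hx : 2 * t ≤ x) : interp t x = 1 := by
  rw [interp, if_neg (by linarith), if_neg (by linarith)]

lemma Ualpha_eq_of_two_mul_le {n : ℕ} {t α x : ℝ} (ht : 0 < t) (hx : 2 * t ≤ x) :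
    Ualpha n t α x = x ^ α + α * (1 - α) / (2 * n) * x ^ (α - 1) := by
  rw [Ualpha, if_neg (by linarith), interp_eq_one ht hx, one_mul]

lemma abs_div_two_mul_natCast_le {a : ℝ} (n : ℕ) (ha : |a| ≤ 1) :
    |a / (2 * n)| ≤ 1 / (2 * n) := by
  rw [abs_div, abs_of_nonneg (by positivity : (0 : ℝ) ≤ 2 * n)]
  gcongr

lemma abs_Ualpha_natCast_div_le (n j : ℕ) (t : ℝ) {α : ℝ} (hα : |α * (1 - α)| ≤ 1) :
    |Ualpha n t α (j / n)| ≤ 3 / 2 * ((j : ℝ) / n) ^ α := by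
  set x : ℝ := j / n
  have hx : 0 ≤ x := by positivity
  rw [Ualpha]
  split_ifs with hx0
  · rw [abs_zero]; positivity
  have hj : (1 : ℝ) ≤ j := by
    have : j ≠ 0 := by rintro rfl; simp [x] at hx0
    exact_mod_cast Nat.one_le_iff_ne_zero.2 this
  have hn : (n : ℝ) ≠ 0 := by rintro h; simp [x, h] at hx0
  have hxα : 0 ≤ x ^ α := rpow_nonneg hx α
  have hI := interp_mem_Icc t x
  -- `x ^ (α - 1) / n = x ^ α / j` with `j ≥ 1`
  have hsmall : x ^ (α - 1) / (2 * n) ≤ x ^ α / 2 := by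
    rw [rpow_sub_one hx0, div_div]
    refine div_le_div_of_nonneg_left hxα two_pos ?_
    simp only [x]; field_simp; linarith
  calc |interp t x * (x ^ α + α * (1 - α) / (2 * n) * x ^ (α - 1))|
      ≤ 1 * (x ^ α + 1 / (2 * n) * x ^ (α - 1)) := by
        rw [abs_mul, abs_of_nonneg hI.1]
        gcongr
        · exact hI.2
        refine (abs_add_le _ _).trans ?_
        rw [abs_of_nonneg hxα, abs_mul, abs_of_nonneg (rpow_nonneg hx _)]
        gcongr
        exact abs_div_two_mul_natCast_le n hα
    _ ≤ 3 / 2 * x ^ α := by rw [one_div_mul_eq_div]; linarith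

noncomputable def UalphaTaylor (n : ℕ) (α p x : ℝ) : ℝ :=
  rpowTaylorPoly α p 4 x + α * (1 - α) / (2 * n) * rpowTaylorPoly (α - 1) p 2 x

lemma hasSum_poissonWeight_mul_UalphaTaylor {n : ℕ} (hn : n ≠ 0) (α : ℝ) {p : ℝ} (hp : 0 < p) :
    HasSum (fun j => poissonWeight (n * p) j * UalphaTaylor n α p (j / n))
      (p ^ α + rpowTaylorCoeff α 3 * p ^ α / (n * p) ^ 2) := by
  have h := (hasSum_poissonWeight_mul_rpowTaylorPoly hn α p 4).add
    ((hasSum_poissonWeight_mul_rpowTaylorPoly hn (α - 1) p 2).mul_left (α * (1 - α) / (2 * n)))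
  convert h using 1
  · ext j; rw [UalphaTaylor]; ring
  simp only [sum_range_succ, range_zero, sum_empty, rpow_sub_natCast hp.ne', rpow_sub_one hp.ne',
    rpowTaylorCoeff_zero, rpowTaylorCoeff_one, rpowTaylorCoeff_two, poissonCentralMoment_zero,
    poissonCentralMoment_one, poissonCentralMoment_two, poissonCentralMoment_three]
  field_simp
  ring

lemma abs_UalphaTaylor_le {n : ℕ} {α p x : ℝ} (hα0 : 0 < α) (hα : α < 3 / 2) (hp : 0 < p)
    (hnp : 1 ≤ n * p) (hx : |x - p| ≤ p) : |UalphaTaylor n α p x| ≤ 5 * p ^ α := by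
  have hpα : 0 < p ^ α := rpow_pos_of_pos hp α
  have h4 := (abs_rpowTaylorPoly_le (β := α) 4 hp hx).trans
    (mul_le_mul_of_nonneg_right (sum_abs_rpowTaylorCoeff_four_le hα0 hα) hpα.le)
  have h2 := (abs_rpowTaylorPoly_le (β := α - 1) 2 hp hx).trans
    (mul_le_mul_of_nonneg_right (sum_abs_rpowTaylorCoeff_sub_one_two_le hα0 hα)
      (rpow_nonneg hp.le _))
  have hc : |α * (1 - α) / (2 * n)| * |rpowTaylorPoly (α - 1) p 2 x| ≤ p ^ α := by
    calc _ ≤ 1 / (2 * n) * (2 * p ^ (α - 1)) :=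
          mul_le_mul (abs_div_two_mul_natCast_le n (abs_mul_one_sub_le_one hα0 hα)) h2
            (abs_nonneg _) (by positivity)
      _ = p ^ α / (n * p) := by rw [rpow_sub_one hp.ne']; field_simp
      _ ≤ p ^ α := div_le_self hpα.le hnp
  rw [UalphaTaylor]
  refine (abs_add_le _ _).trans ?_
  rw [abs_mul]
  linarith

lemma abs_Ualpha_sub_UalphaTaylor_le_of_le {n j : ℕ} {t α p : ℝ} (hα0 : 0 < α)
    (hα : α < 3 / 2) (hp : 0 < p) (hnp : 1 ≤ n * p) (hj : (j : ℝ) / n ≤ p) :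
    |Ualpha n t α (j / n) - UalphaTaylor n α p (j / n)| ≤ 7 * p ^ α := by
  have hx : 0 ≤ (j : ℝ) / n := by positivity
  have hU := (abs_Ualpha_natCast_div_le n j t (abs_mul_one_sub_le_one hα0 hα)).trans
    (mul_le_mul_of_nonneg_left (rpow_le_rpow hx hj hα0.le) (by norm_num))
  have hT := abs_UalphaTaylor_le (x := j / n) hα0 hα hp hnp
    (abs_le.2 ⟨by linarith, by linarith⟩)
  linarith [abs_sub (Ualpha n t α (j / n)) (UalphaTaylor n α p (j / n)), rpow_nonneg hp.le α]

lemma abs_Ualpha_sub_UalphaTaylor_le_of_half_le {n : ℕ} {t α p x : ℝ} (hα0 : 0 < α)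
    (hα : α < 3 / 2) (ht : 0 < t) (htx : 2 * t ≤ x) (hp : 0 < p) (hpx : p / 2 ≤ x) :
    |Ualpha n t α x - UalphaTaylor n α p x|
      ≤ p ^ α * ((x - p) ^ 4 / p ^ 4 + 4 * (x - p) ^ 2 / (n * p ^ 3)) := by
  have hm : 0 < p / 2 := half_pos hp
  have h4 := abs_rpow_sub_rpowTaylorPoly_le 4 (β := α) (p := p) hm (by norm_num; linarith)
    (by linarith) hpx
  have h2 := abs_rpow_sub_rpowTaylorPoly_le 2 (β := α - 1) (p := p) hm (by norm_num; linarith)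
    (by linarith) hpx
  have hm4 := div_two_rpow_le 4 hp.le (γ := α - (4 : ℕ)) (by push_cast; linarith)
  have hm3 := div_two_rpow_le 3 hp.le (γ := α - 1 - (2 : ℕ)) (by push_cast; linarith)
  rw [rpow_sub_natCast hp.ne'] at hm4
  rw [rpow_sub_natCast hp.ne', rpow_sub_one hp.ne'] at hm3
  rw [Even.pow_abs (by decide)] at h4 h2
  have hc := abs_div_two_mul_natCast_le n (abs_mul_one_sub_le_one hα0 hα)
  have c4 := abs_rpowTaylorCoeff_four_le hα0 hα
  have c2 := abs_rpowTaylorCoeff_sub_one_two_le hα0 hα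
  rw [Ualpha_eq_of_two_mul_le ht htx, UalphaTaylor]
  calc _ = |(x ^ α - rpowTaylorPoly α p 4 x)
          + α * (1 - α) / (2 * n) * (x ^ (α - 1) - rpowTaylorPoly (α - 1) p 2 x)| := by ring_nf
    _ ≤ |x ^ α - rpowTaylorPoly α p 4 x|
          + |α * (1 - α) / (2 * n)| * |x ^ (α - 1) - rpowTaylorPoly (α - 1) p 2 x| := by
        rw [← abs_mul]; exact abs_add_le _ _
    _ ≤ 1 / 24 * (2 ^ 4 * (p ^ α / p ^ 4)) * (x - p) ^ 4
          + 1 / (2 * n) * (1 * (2 ^ 3 * (p ^ α / p / p ^ 2)) * (x - p) ^ 2) := by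
        gcongr
        · exact h4.trans (by gcongr)
        · exact h2.trans (by gcongr)
    _ = 2 / 3 * (p ^ α * ((x - p) ^ 4 / p ^ 4)) + p ^ α * (4 * (x - p) ^ 2 / (n * p ^ 3)) := by
        ring
    _ ≤ _ := by
        have : 0 ≤ p ^ α * ((x - p) ^ 4 / p ^ 4) := by positivity
        rw [mul_add]; linarith

lemma abs_Ualpha_sub_UalphaTaylor_le {n : ℕ} {t α p : ℝ} (j : ℕ) (hα0 : 0 < α)
    (hα : α < 3 / 2) (ht : 0 < t) (htp : 4 * t ≤ p) (hnp : 1 ≤ n * p) :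
    |Ualpha n t α (j / n) - UalphaTaylor n α p (j / n)|
      ≤ 7 * p ^ α * (2 ^ (n * p / 2) * (1 / 2) ^ j)
        + p ^ α * (((j : ℝ) / n - p) ^ 4 / p ^ 4 + 4 * ((j : ℝ) / n - p) ^ 2 / (n * p ^ 3)) := by
  have hp : 0 < p := by linarith
  have hn : (0 : ℝ) < n := pos_of_mul_pos_left (one_pos.trans_le hnp) hp.le
  have hB : 0 ≤ p ^ α * (((j : ℝ) / n - p) ^ 4 / p ^ 4 + 4 * ((j : ℝ) / n - p) ^ 2 / (n * p ^ 3)) :=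
    by positivity
  rcases lt_or_ge ((j : ℝ) / n) (p / 2) with hj | hj
  · have hjnp : (j : ℝ) ≤ n * p / 2 := by
      rw [div_lt_iff₀ hn] at hj; linarith
    have hweight : 1 ≤ 2 ^ (n * p / 2) * (1 / 2 : ℝ) ^ j := by
      rw [one_div_pow, mul_one_div, one_le_div (by positivity), ← rpow_natCast]
      exact rpow_le_rpow_of_exponent_le one_le_two hjnp
    have hA : 7 * p ^ α ≤ 7 * p ^ α * (2 ^ (n * p / 2) * (1 / 2) ^ j) :=
      le_mul_of_one_le_right (by positivity) hweight
    have hjp : (j : ℝ) / n ≤ p := by linarith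
    linarith [abs_Ualpha_sub_UalphaTaylor_le_of_le (t := t) hα0 hα hp hnp hjp]
  · have hA : 0 ≤ 7 * p ^ α * (2 ^ (n * p / 2) * (1 / 2 : ℝ) ^ j) := by positivity
    linarith [abs_Ualpha_sub_UalphaTaylor_le_of_half_le (n := n) hα0 hα ht (by linarith) hp hj]

lemma hasSum_poissonWeight_mul_remainder_bound {n : ℕ} (hn : n ≠ 0) (α : ℝ) {p : ℝ}
    (hp : 0 < p) :
    HasSum (fun j => poissonWeight (n * p) j *
        (p ^ α * (((j : ℝ) / n - p) ^ 4 / p ^ 4 + 4 * ((j : ℝ) / n - p) ^ 2 / (n * p ^ 3))))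
      (7 * (p ^ α / (n * p) ^ 2) + p ^ α / (n * p) ^ 3) := by
  have h := ((hasSum_poissonWeight_mul_div_sub_pow hn p 4).mul_left (p ^ α / p ^ 4)).add
    ((hasSum_poissonWeight_mul_div_sub_pow hn p 2).mul_left (4 * p ^ α / (n * p ^ 3)))
  rw [poissonCentralMoment_four, poissonCentralMoment_two] at h
  have hsum : p ^ α / p ^ 4 * ((3 * (n * p) ^ 2 + n * p) / n ^ 4)
      + 4 * p ^ α / (n * p ^ 3) * (n * p / n ^ 2)
      = 7 * (p ^ α / (n * p) ^ 2) + p ^ α / (n * p) ^ 3 := by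
    have : (n : ℝ) ≠ 0 := Nat.cast_ne_zero.2 hn
    field_simp
    ring
  rw [hsum] at h
  exact h.congr_fun fun j => by ring

theorem abs_tsum_poissonWeight_mul_Ualpha_sub_rpow_le {n : ℕ} {t α p : ℝ} (hα0 : 0 < α)
    (hα : α < 3 / 2) (ht : 0 < t) (htp : 4 * t ≤ p) (hnp : 1 ≤ n * p) :
    |∑' j, poissonWeight (n * p) j * Ualpha n t α (j / n) - p ^ α|
      ≤ 9 * p ^ α / (n * p) ^ 2 + 7 * p ^ α * (2 ^ (n * p / 2) * exp (-(n * p / 2))) := by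
  have hp : 0 < p := by linarith
  have hn : n ≠ 0 := by rintro rfl; norm_num at hnp
  have hA := (hasSum_poissonWeight_mul_pow (n * p) (1 / 2)).mul_left
    (7 * p ^ α * 2 ^ (n * p / 2))
  rw [show n * p * (1 / 2 - 1) = -(n * p / 2) by ring, mul_assoc (7 * p ^ α)] at hA
  have key := abs_tsum_sub_le_of_abs_sub_le (hasSum_poissonWeight_mul_UalphaTaylor hn α hp)
    (hA.add (hasSum_poissonWeight_mul_remainder_bound hn α hp)) fun j => by
      rw [← mul_sub, abs_mul, abs_of_nonneg (poissonWeight_nonneg (by positivity) j)]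
      refine (mul_le_mul_of_nonneg_left (abs_Ualpha_sub_UalphaTaylor_le j hα0 hα ht htp hnp)
        (poissonWeight_nonneg (by positivity) j)).trans_eq ?_
      ring
  have hcube : p ^ α / (n * p) ^ 3 ≤ p ^ α / (n * p) ^ 2 :=
    div_le_div_of_nonneg_left (by positivity) (by positivity) (pow_le_pow_right₀ hnp (by norm_num))
  have hbias : |rpowTaylorCoeff α 3 * p ^ α / (n * p) ^ 2| ≤ 1 / 4 * (p ^ α / (n * p) ^ 2) := by
    rw [mul_div_assoc, abs_mul, abs_of_nonneg (by positivity : (0 : ℝ) ≤ p ^ α / (n * p) ^ 2)]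
    gcongr
    exact abs_rpowTaylorCoeff_three_le hα0 hα
  have hq : 0 ≤ p ^ α / (n * p) ^ 2 := by positivity
  calc _ ≤ |∑' j, poissonWeight (n * p) j * Ualpha n t α (j / n)
            - (p ^ α + rpowTaylorCoeff α 3 * p ^ α / (n * p) ^ 2)|
          + |rpowTaylorCoeff α 3 * p ^ α / (n * p) ^ 2| :=
        (abs_sub_le _ _ _).trans_eq (by rw [add_sub_cancel_left])
    _ ≤ _ := by rw [mul_div_assoc 9]; linarith

lemma two_rpow_mul_exp_neg_le {y : ℝ} (hy : 0 ≤ y) :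
    2 ^ (y / 2) * exp (-(y / 2)) ≤ exp (-(y / 8)) := by
  rw [rpow_def_of_pos two_pos, ← exp_add, exp_le_exp]
  nlinarith [log_two_lt_d9]

lemma rpow_div_mul_sq_le {n p L α : ℝ} (hn : 0 < n) (hL : 0 < L) (hLp : L ≤ n * p)
    (hα : α ≤ 2) : p ^ α / (n * p) ^ 2 ≤ 1 / (n ^ α * L ^ (2 - α)) := by
  have hp : 0 < p := pos_of_mul_pos_right (hL.trans_le hLp) hn.le
  calc p ^ α / (n * p) ^ 2 = (n * p) ^ (α - 2) / n ^ α := by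
        rw [rpow_sub (mul_pos hn hp), mul_rpow hn.le hp.le, rpow_two]
        field_simp
    _ ≤ L ^ (α - 2) / n ^ α := by
        gcongr ?_ / _
        exact rpow_le_rpow_of_nonpos hL hLp (by linarith)
    _ = 1 / (n ^ α * L ^ (2 - α)) := by
        rw [show α - 2 = -(2 - α) by ring, rpow_neg hL.le]
        field_simp

theorem Ualpha_bias_bound_general (n : ℕ) (c₁ : ℝ)
    (h1 : 1 ≤ c₁ * Real.log n)
    (α : ℝ) (hα0 : 0 < α) (hα2 : α < 3 / 2)
    (p : ℝ) (hp1 : c₁ * Real.log n / n ≤ p) :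
    |(∑' j : ℕ, Real.exp (-((n : ℝ) * p)) * ((n : ℝ) * p) ^ j / (Nat.factorial j : ℝ) *
          Ualpha n (c₁ * Real.log n / n / 4) α ((j : ℝ) / (n : ℝ))) - p ^ α|
      ≤ 17 / ((n : ℝ) ^ α * (c₁ * Real.log n) ^ (2 - α))
        + (8310 * (1 + α) / (α * (2 - α))) * p ^ α * (n : ℝ) ^ (-(c₁ / 8)) := by
  have hn : (0 : ℝ) < n := Nat.cast_pos.2 (Nat.pos_of_ne_zero fun h => by norm_num [h] at h1)
  have hL : c₁ * Real.log n ≤ n * p := by rw [div_le_iff₀ hn] at hp1; linarith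
  have hpα : 0 ≤ p ^ α := rpow_nonneg ((div_pos (by linarith) hn).trans_le hp1).le α
  have key := abs_tsum_poissonWeight_mul_Ualpha_sub_rpow_le (t := c₁ * Real.log n / n / 4)
    hα0 hα2 (div_pos (div_pos (by linarith) hn) four_pos) (by linarith) (h1.trans hL)
  refine key.trans (add_le_add ?_ ?_)
  · rw [mul_div_assoc]
    calc 9 * (p ^ α / (n * p) ^ 2) ≤ 9 * (1 / (n ^ α * (c₁ * Real.log n) ^ (2 - α))) :=
          mul_le_mul_of_nonneg_left (rpow_div_mul_sq_le hn (by linarith) hL (by linarith))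
            (by norm_num)
      _ ≤ _ := by rw [mul_one_div]; gcongr; norm_num
  · have htail : 2 ^ (n * p / 2) * exp (-(n * p / 2)) ≤ (n : ℝ) ^ (-(c₁ / 8)) := by
      refine (two_rpow_mul_exp_neg_le (by linarith)).trans ?_
      rw [rpow_def_of_pos hn, exp_le_exp]
      linarith
    have hcoeff : 7 ≤ 8310 * (1 + α) / (α * (2 - α)) := by
      rw [le_div_iff₀ (by nlinarith)]; nlinarith
    calc _ ≤ 7 * p ^ α * (n : ℝ) ^ (-(c₁ / 8)) := by gcongr
      _ ≤ _ := by gcongr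

theorem Ualpha_bias_bound (n : ℕ) (hn : 2 ≤ n) (c₁ : ℝ) (hc₁ : 0 < c₁)
    (h1 : 1 ≤ c₁ * Real.log n) (h2 : c₁ * Real.log n ≤ (n : ℝ))
    (α : ℝ) (hα0 : 0 < α) (hα2 : α < 3 / 2)
    (p : ℝ) (hp1 : c₁ * Real.log n / n ≤ p) (hp2 : p ≤ 1) :
    |(∑' j : ℕ, Real.exp (-((n : ℝ) * p)) * ((n : ℝ) * p) ^ j / (Nat.factorial j : ℝ) *
          Ualpha n (c₁ * Real.log n / n / 4) α ((j : ℝ) / (n : ℝ))) - p ^ α|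
      ≤ 17 / ((n : ℝ) ^ α * (c₁ * Real.log n) ^ (2 - α))
        + (8310 * (1 + α) / (α * (2 - α))) * p ^ α * (n : ℝ) ^ (-(c₁ / 8)) :=
  Ualpha_bias_bound_general n c₁ h1 α hα0 hα2 p hp1
end
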